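/- arXiv:1601.00792 — 7 statements merged into one kernel-verified Lean document; each statement's English description precedes it below -/
import Mathlib

section
/- Let d ≥ 1 and let (Ω, 𝓕, P) be a probability space. Let Y : ℝ^d × Ω → [0,∞) be such that for every x ∈ ℝ^d the map ω ↦ Y(x,ω) is measurable and integrable. Assume there exists a countable set T ⊆ ℝ^d with P({ω : Y(x,ω) = 0 for all x ∈ T}) = 0. Then the following are equivalent: (i) for every x₀ ∈ ℝ^d, lim_{‖x‖→∞} E[min(Y(x,·), Y(x₀,·))] = 0; (ii) Y(x,·) → 0 in probability as ‖x‖ → ∞, i.e. for every ε > 0, P(Y(x,·) > ε) → 0 as ‖x‖ → ∞. -/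
open MeasureTheory Filter Topology

/-- Theorem 1.2 (c) ⟺ (d): for a family of nonnegative integrable random variables
`Y x` on a probability space (not identically zero in the a.s. sense witnessd by a
countable set `T`), the expectations `E[min (Y x) (Y x₀)]` tend to `0` as `‖x‖ → ∞`
for every `x₀` iff `Y x → 0` in probability as `‖x‖ → ∞`. -/
theorem stmt0 {d : ℕ} (hd : 1 ≤ d) {Ω : Type*} [MeasurableSpace Ω]
    (P : Measure Ω) [IsProbabilityMeasure P]
    (Y : (Fin d → ℝ) → Ω → ℝ)
    (hmeas : ∀ x, Measurable (Y x))
    (hint : ∀ x, Integrable (Y x) P)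
    (hnonneg : ∀ x ω, 0 ≤ Y x ω)
    (T : Set (Fin d → ℝ)) (hT : T.Countable)
    (hzero : P {ω | ∀ x ∈ T, Y x ω = 0} = 0) :
    (∀ x₀ : Fin d → ℝ,
        Tendsto (fun x => ∫ ω, min (Y x ω) (Y x₀ ω) ∂P)
          (Filter.comap (fun x : Fin d → ℝ => ‖x‖) Filter.atTop) (nhds 0)) ↔
      (∀ ε : ℝ, 0 < ε →
        Tendsto (fun x => P {ω | ε < Y x ω})
          (Filter.comap (fun x : Fin d → ℝ => ‖x‖) Filter.atTop) (nhds 0)) := by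
  set L : Filter (Fin d → ℝ) := Filter.comap (fun x : Fin d → ℝ => ‖x‖) Filter.atTop with hL
  have hminint : ∀ x x₀ : Fin d → ℝ,
      Integrable (fun ω => min (Y x ω) (Y x₀ ω)) P := by
    intro x x₀
    refine (hint x₀).mono ((hmeas x).min (hmeas x₀)).aestronglyMeasurable
      (ae_of_all _ fun ω => ?_)
    rw [Real.norm_eq_abs, Real.norm_eq_abs,
      abs_of_nonneg (le_min (hnonneg x ω) (hnonneg x₀ ω)), abs_of_nonneg (hnonneg x₀ ω)]
    exact min_le_right _ _
  constructor
  · -- (c) → (d)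
    intro h ε hε
    -- T is nonempty
    have hTne : T.Nonempty := by
      rcases T.eq_empty_or_nonempty with hTe | hTne
      · exfalso
        rw [hTe] at hzero
        simp only [Set.mem_empty_iff_false, false_implies, implies_true, Set.setOf_true] at hzero
        simp [measure_univ] at hzero
      · exact hTne
    obtain ⟨f, hf⟩ := hT.exists_eq_range hTne
    set B : ℕ × ℕ → Set Ω := fun p => {ω | 1 / (p.2 + 1 : ℝ) < Y (f p.1) ω} with hB
    have hBmeas : ∀ p, MeasurableSet (B p) := fun p =>
      measurableSet_lt measurable_const (hmeas _)
    set D : ℕ → Set Ω := fun m => ⋃ p ∈ Finset.range m ×ˢ Finset.range m, B p with hD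
    have hDmeas : ∀ m, MeasurableSet (D m) := fun m =>
      (Finset.range m ×ˢ Finset.range m).measurableSet_biUnion fun p _ => hBmeas p
    have hDmono : Monotone D := by
      intro a b hab
      exact Set.iUnion₂_subset fun p hp => Set.subset_iUnion₂ (s := fun p _ => B p) p
        (Finset.product_subset_product (Finset.range_subset_range.2 hab)
          (Finset.range_subset_range.2 hab) hp)
    have hInter : (⋂ m, (D m)ᶜ) ⊆ {ω | ∀ x ∈ T, Y x ω = 0} := by
      intro ω hω x hx
      rw [hf] at hx
      obtain ⟨k, rfl⟩ := hx
      by_contra hne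
      have hpos : 0 < Y (f k) ω := (hnonneg _ _).lt_of_ne (Ne.symm hne)
      obtain ⟨n, hn⟩ := exists_nat_one_div_lt hpos
      have hωB : ω ∈ B (k, n) := hn
      have hmem : ω ∈ D (max k n + 1) := by
        exact Set.mem_biUnion (Finset.mem_product.2
          ⟨Finset.mem_range.2 (Nat.lt_succ_of_le (le_max_left _ _)),
            Finset.mem_range.2 (Nat.lt_succ_of_le (le_max_right _ _))⟩) hωB
      exact (Set.mem_iInter.1 hω (max k n + 1)) hmem
    have htendD : Tendsto (fun m => P ((D m)ᶜ)) atTop (𝓝 0) := by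
      have := tendsto_measure_iInter_atTop (μ := P) (s := fun m => (D m)ᶜ)
        (fun m => ((hDmeas m).compl).nullMeasurableSet)
        (fun a b hab => Set.compl_subset_compl.2 (hDmono hab)) ⟨0, measure_ne_top _ _⟩
      rwa [measure_mono_null hInter hzero] at this
    rw [ENNReal.tendsto_nhds_zero]
    intro η hη
    obtain ⟨m, hm⟩ := (htendD.eventually_le_const (ENNReal.half_pos hη.ne')).exists
    set F := Finset.range m ×ˢ Finset.range m with hF
    -- Markov-type bound for each pair
    have htendS : ∀ p ∈ F,
        Tendsto (fun x => P ({ω | ε < Y x ω} ∩ B p)) L (𝓝 0) := by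
      intro p _
      set c : ℝ := min ε (1 / (p.2 + 1 : ℝ)) with hc
      have hcpos : 0 < c := lt_min hε (by positivity)
      have hMar : ∀ x, (P ({ω | ε < Y x ω} ∩ B p)).toReal ≤
          (∫ ω, min (Y x ω) (Y (f p.1) ω) ∂P) / c := by
        intro x
        set S := {ω | ε < Y x ω} ∩ B p with hS
        have hSmeas : MeasurableSet S :=
          (measurableSet_lt measurable_const (hmeas x)).inter (hBmeas p)
        have h1 : ∫ _ in S, c ∂P ≤ ∫ ω in S, min (Y x ω) (Y (f p.1) ω) ∂P := by
          refine setIntegral_mono_on (integrable_const c).integrableOn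
            (hminint x (f p.1)).integrableOn hSmeas fun ω hω => ?_
          exact le_min ((min_le_left _ _).trans hω.1.le) ((min_le_right _ _).trans hω.2.le)
        have h2 : ∫ ω in S, min (Y x ω) (Y (f p.1) ω) ∂P ≤
            ∫ ω, min (Y x ω) (Y (f p.1) ω) ∂P :=
          setIntegral_le_integral (hminint x (f p.1))
            (ae_of_all _ fun ω => le_min (hnonneg x ω) (hnonneg _ ω))
        rw [setIntegral_const, smul_eq_mul] at h1
        rw [le_div_iff₀ hcpos]
        calc (P S).toReal * c ≤ ∫ ω in S, min (Y x ω) (Y (f p.1) ω) ∂P := h1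
          _ ≤ _ := h2
      have h1 : Tendsto (fun x => (P ({ω | ε < Y x ω} ∩ B p)).toReal) L (𝓝 0) := by
        refine squeeze_zero (fun x => ENNReal.toReal_nonneg) hMar ?_
        simpa using (h (f p.1)).div_const c
      have h2 := ENNReal.tendsto_ofReal h1
      rw [ENNReal.ofReal_zero] at h2
      have heq : (fun x => ENNReal.ofReal ((P ({ω | ε < Y x ω} ∩ B p)).toReal)) =
          fun x => P ({ω | ε < Y x ω} ∩ B p) :=
        funext fun x => ENNReal.ofReal_toReal (measure_ne_top _ _)
      rwa [heq] at h2
    have hsum : Tendsto (fun x => ∑ p ∈ F, P ({ω | ε < Y x ω} ∩ B p)) L (𝓝 0) := by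
      simpa using tendsto_finset_sum F htendS
    filter_upwards [hsum.eventually_le_const (ENNReal.half_pos hη.ne')] with x hx
    calc P {ω | ε < Y x ω}
        ≤ P ({ω | ε < Y x ω} ∩ D m) + P ({ω | ε < Y x ω} \ D m) :=
          measure_le_inter_add_diff _ _ _
      _ ≤ (∑ p ∈ F, P ({ω | ε < Y x ω} ∩ B p)) + P ((D m)ᶜ) := by
          refine add_le_add ?_ (measure_mono (Set.diff_subset_compl _ _))
          rw [hD, Set.inter_iUnion₂]
          exact measure_biUnion_finset_le _ _
      _ ≤ η / 2 + η / 2 := add_le_add hx hm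
      _ = η := ENNReal.add_halves η
  · -- (d) → (c)
    intro h x₀
    rw [Metric.tendsto_nhds]
    intro δ hδ
    have hδ2 : 0 < δ / 2 := half_pos hδ
    have habs : Tendsto (fun x => ∫ ω in {ω | δ / 2 < Y x ω}, Y x₀ ω ∂P) L (𝓝 0) :=
      (hint x₀).tendsto_setIntegral_nhds_zero (h (δ / 2) hδ2)
    filter_upwards [habs.eventually_lt_const hδ2] with x hx
    have hsmeas : MeasurableSet {ω | δ / 2 < Y x ω} :=
      measurableSet_lt measurable_const (hmeas x)
    have hptwise : ∀ ω, min (Y x ω) (Y x₀ ω) ≤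
        δ / 2 + Set.indicator {ω | δ / 2 < Y x ω} (Y x₀) ω := by
      intro ω
      by_cases hω : ω ∈ {ω | δ / 2 < Y x ω}
      · rw [Set.indicator_of_mem hω]
        exact (min_le_right _ _).trans (le_add_of_nonneg_left hδ2.le)
      · rw [Set.indicator_of_notMem hω, add_zero]
        exact (min_le_left _ _).trans (not_lt.1 hω)
    have hintright : Integrable
        (fun ω => δ / 2 + Set.indicator {ω | δ / 2 < Y x ω} (Y x₀) ω) P :=
      (integrable_const _).add ((hint x₀).indicator hsmeas)
    have hbound : ∫ ω, min (Y x ω) (Y x₀ ω) ∂P ≤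
        δ / 2 + ∫ ω in {ω | δ / 2 < Y x ω}, Y x₀ ω ∂P := by
      calc ∫ ω, min (Y x ω) (Y x₀ ω) ∂P
          ≤ ∫ ω, (δ / 2 + Set.indicator {ω | δ / 2 < Y x ω} (Y x₀) ω) ∂P :=
            integral_mono (hminint x x₀) hintright hptwise
        _ = δ / 2 + ∫ ω in {ω | δ / 2 < Y x ω}, Y x₀ ω ∂P := by
            rw [integral_add (integrable_const _) ((hint x₀).indicator hsmeas),
              integral_const, integral_indicator hsmeas, probReal_univ,
              one_smul]
    rw [Real.dist_eq, sub_zero,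
      abs_of_nonneg (integral_nonneg fun ω => le_min (hnonneg x ω) (hnonneg x₀ ω))]
    calc ∫ ω, min (Y x ω) (Y x₀ ω) ∂P
        ≤ δ / 2 + ∫ ω in {ω | δ / 2 < Y x ω}, Y x₀ ω ∂P := hbound
      _ < δ / 2 + δ / 2 := by linarith
      _ = δ := add_halves δ
end

section
/- Let (φ_x)_{x∈ℝ^d} be a measurable non-singular flow on a σ-finite measure space (S, 𝔅, μ) with induced positive L¹-isometries (U_x)_{x∈ℝ^d}. Let g ∈ L¹(S, μ) be nonnegative. Then the following are equivalent: (i) lim_{x→∞} ∫_S min(U_x g, g) dμ = 0; (ii) U_x g → 0 locally in μ-measure as x → ∞. -/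
open MeasureTheory Filter ENNReal

/-- The induced positive `L¹`-isometry of a non-singular flow:
`(U_x g)(s) = ω_x(s) · g(φ_x(s))` where `ω_x = d(μ∘φ_x)/dμ` and
`μ∘φ_x = μ(φ_x(·))` is the pushforward of `μ` under `φ_{-x}`. -/
noncomputable def UOp {d : ℕ} {S : Type*} [MeasurableSpace S] (μ : Measure S)
    (φ : (Fin d → ℝ) → S → S) (x : Fin d → ℝ) (g : S → ℝ) : S → ℝ :=
  fun s => ((μ.map (φ (-x))).rnDeriv μ s).toReal * g (φ x s)

/-- The filter `‖x‖ → ∞` on `ℝ^d`. -/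
def normAtTop (d : ℕ) : Filter (Fin d → ℝ) :=
  Filter.comap (fun x : Fin d → ℝ => ‖x‖) Filter.atTop


private lemma flow_sigmaFinite {d : ℕ} {S : Type*} [MeasurableSpace S]
    (μ : Measure S) [SigmaFinite μ] (φ : (Fin d → ℝ) → S → S)
    (hφm : ∀ x, Measurable (φ x)) (hφ0 : ∀ s, φ 0 s = s)
    (hφadd : ∀ x y s, φ (x + y) s = φ y (φ x s)) (x : Fin d → ℝ) :
    SigmaFinite (μ.map (φ x)) := by
  have h1 : ∀ s, φ (-x) (φ x s) = s := fun s => by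
    rw [← hφadd x (-x) s, add_neg_cancel, hφ0]
  have h2 : ∀ s, φ x (φ (-x) s) = s := fun s => by
    rw [← hφadd (-x) x s, neg_add_cancel, hφ0]
  let e : S ≃ᵐ S := ⟨⟨φ x, φ (-x), h1, h2⟩, hφm x, hφm (-x)⟩
  exact e.sigmaFinite_map

private lemma flow_transfer {d : ℕ} {S : Type*} [MeasurableSpace S]
    (μ : Measure S) [SigmaFinite μ] (φ : (Fin d → ℝ) → S → S)
    (hφm : ∀ x, Measurable (φ x)) (hφ0 : ∀ s, φ 0 s = s)
    (hφadd : ∀ x y s, φ (x + y) s = φ y (φ x s))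
    (hns : ∀ x, μ.map (φ x) ≪ μ ∧ μ ≪ μ.map (φ x))
    (x : Fin d → ℝ) {f : S → ℝ≥0∞} (hf : Measurable f) :
    ∫⁻ s, (μ.map (φ (-x))).rnDeriv μ s * f (φ x s) ∂μ = ∫⁻ s, f s ∂μ := by
  haveI := flow_sigmaFinite μ φ hφm hφ0 hφadd (-x)
  calc ∫⁻ s, (μ.map (φ (-x))).rnDeriv μ s * f (φ x s) ∂μ
      = ∫⁻ s, f (φ x s) ∂(μ.withDensity ((μ.map (φ (-x))).rnDeriv μ)) := by
        have hfc : Measurable fun s => f (φ x s) := hf.comp (hφm x)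
        exact (lintegral_withDensity_eq_lintegral_mul μ (Measure.measurable_rnDeriv _ _) hfc).symm
    _ = ∫⁻ s, f (φ x s) ∂(μ.map (φ (-x))) := by
        rw [Measure.withDensity_rnDeriv_eq _ _ ((hns (-x)).1)]
    _ = ∫⁻ s, f (φ x (φ (-x) s)) ∂μ := lintegral_map (hf.comp (hφm x)) (hφm (-x))
    _ = ∫⁻ s, f s ∂μ := lintegral_congr fun s => by rw [← hφadd, neg_add_cancel, hφ0]

private lemma flow_cocycle {d : ℕ} {S : Type*} [MeasurableSpace S]
    (μ : Measure S) [SigmaFinite μ] (φ : (Fin d → ℝ) → S → S)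
    (hφm : ∀ x, Measurable (φ x)) (hφ0 : ∀ s, φ 0 s = s)
    (hφadd : ∀ x y s, φ (x + y) s = φ y (φ x s))
    (hns : ∀ x, μ.map (φ x) ≪ μ ∧ μ ≪ μ.map (φ x))
    (x y : Fin d → ℝ) :
    (μ.map (φ (-(x + y)))).rnDeriv μ =ᵐ[μ]
      fun s => (μ.map (φ (-y))).rnDeriv μ s * (μ.map (φ (-x))).rnDeriv μ (φ y s) := by
  haveI := flow_sigmaFinite μ φ hφm hφ0 hφadd (-x)
  haveI := flow_sigmaFinite μ φ hφm hφ0 hφadd (-y)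
  have hwx : Measurable ((μ.map (φ (-x))).rnDeriv μ) := Measure.measurable_rnDeriv _ _
  have hwy : Measurable ((μ.map (φ (-y))).rnDeriv μ) := Measure.measurable_rnDeriv _ _
  have hcomp : Measurable fun s => (μ.map (φ (-x))).rnDeriv μ (φ y s) := hwx.comp (hφm y)
  have hm : Measurable fun s => (μ.map (φ (-y))).rnDeriv μ s *
      (μ.map (φ (-x))).rnDeriv μ (φ y s) := hwy.mul hcomp
  have hkey : μ.withDensity (fun s => (μ.map (φ (-y))).rnDeriv μ s *
      (μ.map (φ (-x))).rnDeriv μ (φ y s)) = μ.map (φ (-(x + y))) := by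
    have h1 : μ.withDensity (fun s => (μ.map (φ (-y))).rnDeriv μ s *
        (μ.map (φ (-x))).rnDeriv μ (φ y s))
        = (μ.map (φ (-y))).withDensity (fun s => (μ.map (φ (-x))).rnDeriv μ (φ y s)) := by
      rw [show (fun s => (μ.map (φ (-y))).rnDeriv μ s * (μ.map (φ (-x))).rnDeriv μ (φ y s))
          = ((μ.map (φ (-y))).rnDeriv μ) * (fun s => (μ.map (φ (-x))).rnDeriv μ (φ y s))
          from rfl,
        withDensity_mul μ hwy hcomp,
        Measure.withDensity_rnDeriv_eq _ _ ((hns (-y)).1)]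
    rw [h1]
    ext A hA
    rw [withDensity_apply _ hA,
      setLIntegral_map hA hcomp (hφm (-y))]
    have h2 : ∫⁻ s in φ (-y) ⁻¹' A, (μ.map (φ (-x))).rnDeriv μ (φ y (φ (-y) s)) ∂μ
        = ∫⁻ s in φ (-y) ⁻¹' A, (μ.map (φ (-x))).rnDeriv μ s ∂μ :=
      lintegral_congr fun s => by rw [← hφadd, neg_add_cancel, hφ0]
    rw [h2, ← withDensity_apply _ ((hφm (-y)) hA),
      Measure.withDensity_rnDeriv_eq _ _ ((hns (-x)).1),
      ← Measure.map_apply (hφm (-y)) hA,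
      Measure.map_map (hφm (-y)) (hφm (-x))]
    have hcompφ : (φ (-y)) ∘ (φ (-x)) = φ (-(x + y)) := by
      funext s
      rw [Function.comp_apply, ← hφadd, neg_add]
    rw [hcompφ]
  conv_lhs => rw [← hkey]
  exact Measure.rnDeriv_withDensity μ hm

private lemma flow_minshift {d : ℕ} {S : Type*} [MeasurableSpace S]
    (μ : Measure S) [SigmaFinite μ] (φ : (Fin d → ℝ) → S → S)
    (hφm : ∀ x, Measurable (φ x)) (hφ0 : ∀ s, φ 0 s = s)
    (hφadd : ∀ x y s, φ (x + y) s = φ y (φ x s))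
    (hns : ∀ x, μ.map (φ x) ≪ μ ∧ μ ≪ μ.map (φ x))
    (a b : Fin d → ℝ) {G : S → ℝ≥0∞} (hG : Measurable G) :
    ∫⁻ s, min ((μ.map (φ (-a))).rnDeriv μ s * G (φ a s))
        ((μ.map (φ (-b))).rnDeriv μ s * G (φ b s)) ∂μ
      = ∫⁻ s, min ((μ.map (φ (-(a - b)))).rnDeriv μ s * G (φ (a - b) s)) (G s) ∂μ := by
  have hmin : ∀ c u v : ℝ≥0∞, min (c * u) (c * v) = c * min u v := by
    intro c u v
    rcases le_total u v with h | h
    · rw [min_eq_left h, min_eq_left (mul_le_mul_right h c)]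
    · rw [min_eq_right h, min_eq_right (mul_le_mul_right h c)]
  have hco := flow_cocycle μ φ hφm hφ0 hφadd hns (a - b) b
  rw [sub_add_cancel] at hco
  have hF : Measurable fun t =>
      min ((μ.map (φ (-(a - b)))).rnDeriv μ t * G (φ (a - b) t)) (G t) :=
    ((Measure.measurable_rnDeriv _ _).mul (hG.comp (hφm _))).min hG
  calc ∫⁻ s, min ((μ.map (φ (-a))).rnDeriv μ s * G (φ a s))
        ((μ.map (φ (-b))).rnDeriv μ s * G (φ b s)) ∂μ
      = ∫⁻ s, (μ.map (φ (-b))).rnDeriv μ s *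
          (fun t => min ((μ.map (φ (-(a - b)))).rnDeriv μ t * G (φ (a - b) t)) (G t))
            (φ b s) ∂μ := by
        refine lintegral_congr_ae ?_
        filter_upwards [hco] with s hs
        have hφab : φ a s = φ (a - b) (φ b s) := by
          rw [← hφadd b (a - b) s, add_sub_cancel]
        rw [hφab, hs, mul_assoc, hmin]
    _ = ∫⁻ s, min ((μ.map (φ (-(a - b)))).rnDeriv μ s * G (φ (a - b) s)) (G s) ∂μ :=
        flow_transfer μ φ hφm hφ0 hφadd hns b hF

/-- For a measurable non-singular flow `(φ_x)_{x∈ℝ^d}` on a σ-finite measure space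
and a nonnegative `g ∈ L¹(μ)`: `∫ min(U_x g, g) dμ → 0` as `x → ∞` iff
`U_x g → 0` locally in measure as `x → ∞`. -/
theorem stmt1 {d : ℕ} (hd : 1 ≤ d) {S : Type*} [MeasurableSpace S]
    (μ : Measure S) [SigmaFinite μ]
    (φ : (Fin d → ℝ) → S → S)
    (hφmeas : Measurable fun p : (Fin d → ℝ) × S => φ p.1 p.2)
    (hφm : ∀ x, Measurable (φ x))
    (hφ0 : ∀ s, φ 0 s = s)
    (hφadd : ∀ x y s, φ (x + y) s = φ y (φ x s))
    (hns : ∀ x, μ.map (φ x) ≪ μ ∧ μ ≪ μ.map (φ x))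
    (g : S → ℝ) (hg : Integrable g μ) (hgnn : ∀ s, 0 ≤ g s) :
    Tendsto (fun x => ∫ s, min (UOp μ φ x g s) (g s) ∂μ) (normAtTop d) (nhds 0) ↔
      (∀ B : Set S, MeasurableSet B → μ B < ⊤ → ∀ ε : ℝ, 0 < ε →
        Tendsto (fun x => μ (B ∩ {s | ε < UOp μ φ x g s})) (normAtTop d) (nhds 0)) := by
  classical
  obtain ⟨g', hg'meas, hg'nn, hgg'⟩ :
      ∃ g' : S → ℝ, Measurable g' ∧ (∀ s, 0 ≤ g' s) ∧ g =ᵐ[μ] g' := by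
    refine ⟨fun s => max (hg.1.mk g s) 0,
      hg.1.stronglyMeasurable_mk.measurable.max measurable_const,
      fun s => le_max_right _ _, ?_⟩
    filter_upwards [hg.1.ae_eq_mk] with s hs
    rw [← hs, max_eq_left (hgnn s)]
  have hg'int : Integrable g' μ := hg.congr hgg'
  have hUmeas : ∀ x, Measurable (UOp μ φ x g') := by
    intro x
    unfold UOp
    exact ((Measure.measurable_rnDeriv _ _).ennreal_toReal).mul (hg'meas.comp (hφm x))
  have hUae : ∀ x, UOp μ φ x g =ᵐ[μ] UOp μ φ x g' := by
    intro x
    have hq : Measure.QuasiMeasurePreserving (φ x) μ μ := ⟨hφm x, (hns x).1⟩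
    filter_upwards [hq.ae_eq_comp hgg'] with s hs
    unfold UOp
    simp only [Function.comp_apply] at hs
    rw [hs]
  have hVae : ∀ x, (fun s => ENNReal.ofReal (UOp μ φ x g' s)) =ᵐ[μ]
      fun s => (μ.map (φ (-x))).rnDeriv μ s * ENNReal.ofReal (g' (φ x s)) := by
    intro x
    haveI := flow_sigmaFinite μ φ hφm hφ0 hφadd (-x)
    filter_upwards [Measure.rnDeriv_lt_top (μ.map (φ (-x))) μ] with s hs
    unfold UOp
    rw [ENNReal.ofReal_mul ENNReal.toReal_nonneg, ENNReal.ofReal_toReal hs.ne]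
  set L : (Fin d → ℝ) → ℝ≥0∞ := fun x => ∫⁻ s,
      min ((μ.map (φ (-x))).rnDeriv μ s * ENNReal.ofReal (g' (φ x s)))
        (ENNReal.ofReal (g' s)) ∂μ with hLdef
  have hGm : Measurable fun s => ENNReal.ofReal (g' s) :=
    ENNReal.measurable_ofReal.comp hg'meas
  have hGfin : ∫⁻ s, ENNReal.ofReal (g' s) ∂μ ≠ ∞ := by
    have h1 : ∫⁻ s, ENNReal.ofReal (g' s) ∂μ = ∫⁻ s, (‖g' s‖₊ : ℝ≥0∞) ∂μ :=
      lintegral_congr fun s => by rw [← Real.enorm_eq_ofReal (hg'nn s), enorm_eq_nnnorm]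
    rw [h1]
    exact hg'int.2.ne
  have hLfin : ∀ x, L x ≠ ∞ := fun x =>
    (lt_of_le_of_lt (lintegral_mono fun s => min_le_right _ _) hGfin.lt_top).ne
  have hIL : ∀ x, ∫ s, min (UOp μ φ x g' s) (g' s) ∂μ = (L x).toReal := by
    intro x
    have hUnn : ∀ s, 0 ≤ UOp μ φ x g' s := fun s =>
      mul_nonneg ENNReal.toReal_nonneg (hg'nn _)
    have hmm : AEStronglyMeasurable (fun s => min (UOp μ φ x g' s) (g' s)) μ :=
      ((hUmeas x).min hg'meas).aestronglyMeasurable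
    rw [integral_eq_lintegral_of_nonneg_ae
      (Eventually.of_forall fun s => le_min (hUnn s) (hg'nn s)) hmm]
    congr 1
    refine lintegral_congr_ae ?_
    filter_upwards [hVae x] with s hs
    rw [Monotone.map_min (fun _ _ h => ENNReal.ofReal_le_ofReal h)]
    rw [show ENNReal.ofReal (UOp μ φ x g' s)
      = (μ.map (φ (-x))).rnDeriv μ s * ENNReal.ofReal (g' (φ x s)) from hs]
  have hIeq : ∀ x, ∫ s, min (UOp μ φ x g s) (g s) ∂μ
      = ∫ s, min (UOp μ φ x g' s) (g' s) ∂μ := by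
    intro x
    refine integral_congr_ae ?_
    filter_upwards [hUae x, hgg'] with s h1 h2
    rw [h1, h2]
  have hMeq : ∀ (x : Fin d → ℝ) (ε : ℝ) (B : Set S),
      μ (B ∩ {s | ε < UOp μ φ x g s}) = μ (B ∩ {s | ε < UOp μ φ x g' s}) := by
    intro x ε B
    refine measure_congr ?_
    filter_upwards [hUae x] with s hs
    change (s ∈ B ∩ {s | ε < UOp μ φ x g s}) = (s ∈ B ∩ {s | ε < UOp μ φ x g' s})
    simp only [Set.mem_inter_iff, Set.mem_setOf_eq, hs]
  have hLmin : ∀ a b : Fin d → ℝ, ∫⁻ s,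
      min ((μ.map (φ (-a))).rnDeriv μ s * ENNReal.ofReal (g' (φ a s)))
        ((μ.map (φ (-b))).rnDeriv μ s * ENNReal.ofReal (g' (φ b s))) ∂μ = L (a - b) := by
    intro a b
    rw [hLdef]
    exact flow_minshift μ φ hφm hφ0 hφadd hns a b hGm
  constructor
  · -- hard direction
    intro hT B hB hBfin ε hε
    have hgoal : Tendsto (fun x => μ (B ∩ {s | ε < UOp μ φ x g' s})) (normAtTop d) (nhds 0) →
        Tendsto (fun x => μ (B ∩ {s | ε < UOp μ φ x g s})) (normAtTop d) (nhds 0) :=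
      fun h => h.congr fun x => (hMeq x ε B).symm
    refine hgoal ?_
    by_contra hcon
    rw [ENNReal.tendsto_nhds_zero] at hcon
    push_neg at hcon
    obtain ⟨θ, hθpos, hfreq⟩ := hcon
    have hfreq : ∃ᶠ x in normAtTop d, ¬ μ (B ∩ {s | ε < UOp μ φ x g' s}) ≤ θ :=
      hfreq.mono fun x hx => not_le.mpr hx
    have hθtop : θ ≠ ∞ := by
      obtain ⟨x₀, hx₀⟩ := hfreq.exists
      have h5 : θ < μ B := lt_of_lt_of_le (not_le.mp hx₀)
        (measure_mono Set.inter_subset_left)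
      exact (lt_trans h5 hBfin).ne
    have hT' : Tendsto (fun x => ∫ s, min (UOp μ φ x g' s) (g' s) ∂μ) (normAtTop d) (nhds 0) :=
      hT.congr fun x => hIeq x
    have hLT : Tendsto L (normAtTop d) (nhds 0) := by
      have h1 : ∀ x, L x = ENNReal.ofReal (∫ s, min (UOp μ φ x g' s) (g' s) ∂μ) := fun x => by
        rw [hIL x, ENNReal.ofReal_toReal (hLfin x)]
      have h2 := (ENNReal.continuous_ofReal.tendsto 0).comp hT'
      simp only [ENNReal.ofReal_zero] at h2
      exact h2.congr fun x => (h1 x).symm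
    have hLsmall : ∀ δ : ℝ≥0∞, 0 < δ → ∃ R : ℝ, ∀ y : Fin d → ℝ, R ≤ ‖y‖ → L y ≤ δ := by
      intro δ hδ
      have h3 := ENNReal.tendsto_nhds_zero.mp hLT δ hδ
      rw [normAtTop, eventually_comap, eventually_atTop] at h3
      obtain ⟨R, hR⟩ := h3
      exact ⟨R, fun y hy => hR ‖y‖ hy y rfl⟩
    have hfreq' : ∀ R : ℝ, ∃ z : Fin d → ℝ, R ≤ ‖z‖ ∧
        θ < μ (B ∩ {s | ε < UOp μ φ z g' s}) := by
      intro R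
      by_contra hno
      push_neg at hno
      refine hfreq ?_
      rw [normAtTop, eventually_comap, eventually_atTop]
      exact ⟨R, fun b hb z hz => not_not_intro (hno z (hz ▸ hb))⟩
    have hstep : ∀ δ : ℝ≥0∞, 0 < δ → ∀ M : ℝ, ∃ z : Fin d → ℝ,
        θ < μ (B ∩ {s | ε < UOp μ φ z g' s}) ∧
        ∀ v : Fin d → ℝ, ‖v‖ ≤ M → L (z - v) ≤ δ := by
      intro δ hδ M
      obtain ⟨R, hR⟩ := hLsmall δ hδ
      obtain ⟨z, hz1, hz2⟩ := hfreq' (max R 0 + max M 0)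
      refine ⟨z, hz2, fun v hv => hR _ ?_⟩
      have h1 : ‖z‖ - ‖v‖ ≤ ‖z - v‖ := norm_sub_norm_le z v
      have h2 : ‖v‖ ≤ max M 0 := le_trans hv (le_max_left _ _)
      have h3 : R ≤ max R 0 := le_max_left _ _
      linarith
    set δf : ℕ → ℝ≥0∞ := fun n => ENNReal.ofReal ε * (θ / (4 * 2 ^ n)) with hδfdef
    have h4top : ∀ n : ℕ, (4 : ℝ≥0∞) * 2 ^ n ≠ ∞ :=
      fun n => ENNReal.mul_ne_top (by norm_num) (ENNReal.pow_ne_top (by norm_num))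
    have hδfpos : ∀ n, 0 < δf n := fun n =>
      ENNReal.mul_pos (ENNReal.ofReal_pos.mpr hε).ne'
        (ENNReal.div_pos hθpos.ne' (h4top n)).ne'
    obtain ⟨f, hf0, hfs⟩ : ∃ f : ℕ → (Fin d → ℝ) × ℝ,
        f 0 = ((hstep (δf 0) (hδfpos 0) 0).choose, ‖(hstep (δf 0) (hδfpos 0) 0).choose‖) ∧
        ∀ n, f (n + 1) = ((hstep (δf (n + 1)) (hδfpos (n + 1)) (f n).2).choose,
          max (f n).2 ‖(hstep (δf (n + 1)) (hδfpos (n + 1)) (f n).2).choose‖) :=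
      ⟨Nat.rec ((hstep (δf 0) (hδfpos 0) 0).choose, ‖(hstep (δf 0) (hδfpos 0) 0).choose‖)
        (fun n p => ((hstep (δf (n + 1)) (hδfpos (n + 1)) p.2).choose,
          max p.2 ‖(hstep (δf (n + 1)) (hδfpos (n + 1)) p.2).choose‖)), rfl, fun n => rfl⟩
    set x : ℕ → Fin d → ℝ := fun n => (f n).1 with hxdef
    have hbad : ∀ n, θ < μ (B ∩ {s | ε < UOp μ φ (x n) g' s}) := by
      intro n
      cases n with
      | zero =>
        have : x 0 = (hstep (δf 0) (hδfpos 0) 0).choose := by rw [hxdef]; simp only; rw [hf0]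
        rw [this]
        exact (hstep (δf 0) (hδfpos 0) 0).choose_spec.1
      | succ n =>
        have : x (n + 1) = (hstep (δf (n + 1)) (hδfpos (n + 1)) (f n).2).choose := by
          rw [hxdef]; simp only; rw [hfs n]
        rw [this]
        exact (hstep (δf (n + 1)) (hδfpos (n + 1)) (f n).2).choose_spec.1
    have hmono2 : ∀ n, (f n).2 ≤ (f (n + 1)).2 := fun n => by
      rw [hfs n]; exact le_max_left _ _
    have hnorm : ∀ m n, m ≤ n → ‖x m‖ ≤ (f n).2 := by
      intro m n hmn
      induction n with
      | zero =>
        rw [Nat.le_zero] at hmn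
        subst hmn
        have : x 0 = (hstep (δf 0) (hδfpos 0) 0).choose := by rw [hxdef]; simp only; rw [hf0]
        rw [this, hf0]
      | succ n ih =>
        rcases eq_or_lt_of_le hmn with heq | hlt
        · subst heq
          have : x (n + 1) = (hstep (δf (n + 1)) (hδfpos (n + 1)) (f n).2).choose := by
            rw [hxdef]; simp only; rw [hfs n]
          rw [this, hfs n]
          exact le_max_right _ _
        · exact (ih (Nat.lt_succ_iff.mp hlt)).trans (hmono2 n)
    have hLsmall2 : ∀ m n, m < n → L (x n - x m) ≤ δf n := by
      intro m n hmn
      cases n with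
      | zero => exact absurd hmn (Nat.not_lt_zero m)
      | succ n =>
        have h1 : ‖x m‖ ≤ (f n).2 := hnorm m n (Nat.lt_succ_iff.mp hmn)
        have hx : x (n + 1) = (hstep (δf (n + 1)) (hδfpos (n + 1)) (f n).2).choose := by
          rw [hxdef]; simp only; rw [hfs n]
        rw [hx]
        exact (hstep (δf (n + 1)) (hδfpos (n + 1)) (f n).2).choose_spec.2 (x m) h1
    set C : ℕ → Set S := fun n => B ∩ {s | ε < UOp μ φ (x n) g' s} with hCdef
    have hCmeas : ∀ n, MeasurableSet (C n) := fun n =>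
      hB.inter (measurableSet_lt measurable_const (hUmeas (x n)))
    have hCB : ∀ n, C n ⊆ B := fun n => Set.inter_subset_left
    have hpair : ∀ m n, m < n → μ (C n ∩ C m) ≤ θ / (4 * 2 ^ n) := by
      intro m n hmn
      have hkey : ENNReal.ofReal ε * μ (C n ∩ C m) ≤ L (x n - x m) := by
        have hle : ∫⁻ _ in C n ∩ C m, ENNReal.ofReal ε ∂μ ≤
            ∫⁻ s in C n ∩ C m,
              min ((μ.map (φ (-(x n)))).rnDeriv μ s * ENNReal.ofReal (g' (φ (x n) s)))
                ((μ.map (φ (-(x m)))).rnDeriv μ s * ENNReal.ofReal (g' (φ (x m) s))) ∂μ := by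
          refine setLIntegral_mono_ae
            ((((Measure.measurable_rnDeriv _ _).mul (hGm.comp (hφm _))).min
              ((Measure.measurable_rnDeriv _ _).mul (hGm.comp (hφm _)))).aemeasurable.restrict) ?_
          filter_upwards [hVae (x n), hVae (x m)] with s h1 h2 hmem
          refine le_min ?_ ?_
          · rw [← h1]
            exact ENNReal.ofReal_le_ofReal hmem.1.2.le
          · rw [← h2]
            exact ENNReal.ofReal_le_ofReal hmem.2.2.le
        calc ENNReal.ofReal ε * μ (C n ∩ C m)
            = ∫⁻ _ in C n ∩ C m, ENNReal.ofReal ε ∂μ := (setLIntegral_const _ _).symm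
          _ ≤ _ := hle
          _ ≤ ∫⁻ s, min ((μ.map (φ (-(x n)))).rnDeriv μ s * ENNReal.ofReal (g' (φ (x n) s)))
                ((μ.map (φ (-(x m)))).rnDeriv μ s * ENNReal.ofReal (g' (φ (x m) s))) ∂μ :=
              setLIntegral_le_lintegral _ _
          _ = L (x n - x m) := hLmin (x n) (x m)
      have h2 := hkey.trans (hLsmall2 m n hmn)
      rw [hδfdef] at h2
      exact (ENNReal.mul_le_mul_iff_right (ENNReal.ofReal_pos.mpr hε).ne' ENNReal.ofReal_ne_top).mp h2
    set D : ℕ → Set S := fun n => C n \ ⋃ m ∈ Finset.range n, C m with hDdef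
    have hDmeas : ∀ n, MeasurableSet (D n) := fun n =>
      (hCmeas n).diff ((Finset.range n).measurableSet_biUnion fun m _ => hCmeas m)
    have hDdisj : ∀ i j, i ≠ j → Disjoint (D i) (D j) := by
      have key : ∀ i j, i < j → Disjoint (D i) (D j) := by
        intro i j hij
        rw [Set.disjoint_left]
        intro s hsi hsj
        exact hsj.2 (Set.mem_biUnion (Finset.mem_range.mpr hij) hsi.1)
      intro i j hij
      rcases hij.lt_or_gt with h | h
      · exact key i j h
      · exact (key j i h).symm
    have hβtop : θ - θ / 4 ≠ ∞ := (tsub_le_self.trans_lt hθtop.lt_top).ne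
    have hDlow : ∀ n, θ - θ / 4 ≤ μ (D n) := by
      intro n
      have hsub : C n ⊆ D n ∪ ⋃ m ∈ Finset.range n, (C n ∩ C m) := by
        intro s hs
        by_cases h : s ∈ ⋃ m ∈ Finset.range n, C m
        · right
          simp only [Set.mem_iUnion] at h ⊢
          obtain ⟨m, hm1, hm2⟩ := h
          exact ⟨m, hm1, hs, hm2⟩
        · left
          exact ⟨hs, h⟩
      have h1 : μ (C n) ≤ μ (D n) + ∑ m ∈ Finset.range n, μ (C n ∩ C m) :=
        (measure_mono hsub).trans ((measure_union_le _ _).trans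
          (add_le_add_right (measure_biUnion_finset_le _ _) _))
      have hn2 : (n : ℝ≥0∞) ≤ 2 ^ n := by
        have h := (Nat.lt_two_pow_self (n := n)).le
        exact_mod_cast h
      have h2 : ∑ m ∈ Finset.range n, μ (C n ∩ C m) ≤ θ / 4 := by
        calc ∑ m ∈ Finset.range n, μ (C n ∩ C m)
            ≤ ∑ _m ∈ Finset.range n, θ / (4 * 2 ^ n) :=
              Finset.sum_le_sum fun m hm => hpair m n (Finset.mem_range.mp hm)
          _ = (n : ℝ≥0∞) * (θ / (4 * 2 ^ n)) := by
              rw [Finset.sum_const, nsmul_eq_mul, Finset.card_range]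
          _ ≤ 2 ^ n * (θ / (4 * 2 ^ n)) := mul_le_mul_left hn2 _
          _ = 2 ^ n * θ / (2 ^ n * 4) := by rw [← mul_div_assoc, mul_comm (4 : ℝ≥0∞)]
          _ = θ / 4 := ENNReal.mul_div_mul_left _ _ (by positivity) (ENNReal.pow_ne_top (by norm_num))
      have h3 : θ ≤ μ (D n) + θ / 4 :=
        le_trans (hbad n).le (h1.trans (add_le_add_right h2 _))
      exact tsub_le_iff_right.mpr h3
    have hβpos : 0 < θ - θ / 4 := by
      rw [tsub_pos_iff_lt]
      calc θ / 4 ≤ θ / 2 := by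
            rw [ENNReal.div_eq_inv_mul, ENNReal.div_eq_inv_mul]
            exact mul_le_mul_left (ENNReal.inv_le_inv.mpr (by norm_num)) θ
        _ < θ := ENNReal.half_lt_self hθpos.ne' hθtop
    have hsum : ∀ N : ℕ, (N : ℝ≥0∞) * (θ - θ / 4) ≤ μ B := by
      intro N
      calc (N : ℝ≥0∞) * (θ - θ / 4)
          = ∑ _n ∈ Finset.range N, (θ - θ / 4) := by
            rw [Finset.sum_const, nsmul_eq_mul, Finset.card_range]
        _ ≤ ∑ n ∈ Finset.range N, μ (D n) := Finset.sum_le_sum fun n _ => hDlow n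
        _ = μ (⋃ n ∈ Finset.range N, D n) :=
            (measure_biUnion_finset (fun i _ j _ hij => hDdisj i j hij)
              (fun n _ => hDmeas n)).symm
        _ ≤ μ B := measure_mono (Set.iUnion₂_subset fun n _ =>
            Set.Subset.trans Set.diff_subset (hCB n))
    obtain ⟨N, hN⟩ := ENNReal.exists_nat_gt (ENNReal.div_lt_top hBfin.ne hβpos.ne').ne
    have hfin : μ B < (N : ℝ≥0∞) * (θ - θ / 4) := by
      have h5 : μ B = μ B / (θ - θ / 4) * (θ - θ / 4) :=
        (ENNReal.div_mul_cancel hβpos.ne' hβtop).symm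
      rw [h5]
      exact (ENNReal.mul_lt_mul_iff_left hβpos.ne' hβtop).mpr hN
    exact absurd (hsum N) (not_le.mpr hfin)
  · -- easy direction
    intro H
    have hLT : Tendsto L (normAtTop d) (nhds 0) := by
      rw [ENNReal.tendsto_nhds_zero]
      intro η hη
      rcases eq_or_ne η ∞ with rfl | hηtop
      · exact Eventually.of_forall fun _ => le_top
      have hη3 : η / 3 ≠ 0 := by
        simp only [ne_eq, ENNReal.div_eq_zero_iff, hη.ne', false_or]
        norm_num
      obtain ⟨δ, hδpos, hδ⟩ : ∃ δ : ℝ, 0 < δ ∧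
          ∫⁻ s in {t | g' t ≤ δ}, ENNReal.ofReal (g' s) ∂μ ≤ η / 3 := by
        have hmeasn : ∀ n : ℕ, MeasurableSet {t | g' t ≤ ((n : ℝ) + 1)⁻¹} :=
          fun n => measurableSet_le hg'meas measurable_const
        have htail : Tendsto (fun n : ℕ => ∫⁻ s in {t | g' t ≤ ((n : ℝ) + 1)⁻¹},
            ENNReal.ofReal (g' s) ∂μ) atTop (nhds 0) := by
          have hpt : ∀ s, Tendsto (fun n : ℕ =>
              Set.indicator {t | g' t ≤ ((n : ℝ) + 1)⁻¹}
                (fun u => ENNReal.ofReal (g' u)) s) atTop (nhds 0) := by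
            intro s
            rcases eq_or_lt_of_le (hg'nn s) with h0 | h0
            · have hz : ∀ n : ℕ, Set.indicator {t | g' t ≤ ((n : ℝ) + 1)⁻¹}
                  (fun u => ENNReal.ofReal (g' u)) s = 0 := by
                intro n
                by_cases hsin : s ∈ {t | g' t ≤ ((n : ℝ) + 1)⁻¹}
                · rw [Set.indicator_of_mem hsin, ← h0, ENNReal.ofReal_zero]
                · rw [Set.indicator_of_notMem hsin]
              simpa only [hz] using (tendsto_const_nhds : Tendsto (fun _ : ℕ => (0 : ℝ≥0∞)) _ _)
            · have hinv : Tendsto (fun n : ℕ => ((n : ℝ) + 1)⁻¹) atTop (nhds 0) := by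
                simpa only [one_div] using tendsto_one_div_add_atTop_nhds_zero_nat (𝕜 := ℝ)
              have hev : ∀ᶠ n : ℕ in atTop, Set.indicator {t | g' t ≤ ((n : ℝ) + 1)⁻¹}
                  (fun u => ENNReal.ofReal (g' u)) s = 0 := by
                filter_upwards [hinv.eventually_lt_const h0] with n hn
                rw [Set.indicator_of_notMem (by simpa using not_le.mpr hn)]
              have hev' : (fun n : ℕ => Set.indicator {t | g' t ≤ ((n : ℝ) + 1)⁻¹}
                  (fun u => ENNReal.ofReal (g' u)) s) =ᶠ[atTop] (fun _ => (0 : ℝ≥0∞)) := hev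
              exact Tendsto.congr' hev'.symm tendsto_const_nhds
          have hdom := tendsto_lintegral_of_dominated_convergence
            (μ := μ)
            (F := fun n s => Set.indicator {t | g' t ≤ ((n : ℝ) + 1)⁻¹}
              (fun u => ENNReal.ofReal (g' u)) s)
            (f := fun _ => 0)
            (bound := fun s => ENNReal.ofReal (g' s))
            (fun n => hGm.indicator (hmeasn n))
            (fun n => Eventually.of_forall fun s => Set.indicator_le_self _ _ s)
            hGfin
            (Eventually.of_forall hpt)
          simp only [lintegral_zero] at hdom
          exact hdom.congr fun n =>
            lintegral_indicator (hmeasn n) (fun u => ENNReal.ofReal (g' u))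
        obtain ⟨n, hn⟩ := (ENNReal.tendsto_nhds_zero.mp htail (η / 3)
          (pos_iff_ne_zero.mpr hη3)).exists
        exact ⟨((n : ℝ) + 1)⁻¹, by positivity, hn⟩
      set B : Set S := {t | δ < g' t} with hBdef
      have hBmeas : MeasurableSet B := measurableSet_lt measurable_const hg'meas
      have hBfin : μ B < ∞ := hg'int.measure_gt_lt_top hδpos
      obtain ⟨ζ, hζpos, hζ⟩ := exists_pos_setLIntegral_lt_of_measure_lt (μ := μ) hGfin hη3
      set c : ℝ≥0∞ := (η / 3) / (μ B + 1) with hcdef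
      have hc0 : c ≠ 0 :=
        (ENNReal.div_pos hη3 (by simp [hBfin.ne])).ne'
      have hη3top : η / 3 ≠ ∞ := by
        simp only [ne_eq, ENNReal.div_eq_top]
        push_neg
        exact ⟨fun _ => by norm_num, fun h => absurd h hηtop⟩
      have hctop : c ≠ ∞ := (ENNReal.div_lt_top hη3top (by simp)).ne
      set ε' : ℝ := c.toReal with hε'def
      have hε'pos : 0 < ε' := ENNReal.toReal_pos hc0 hctop
      have hofε' : ENNReal.ofReal ε' = c := ENNReal.ofReal_toReal hctop
      have hTB : Tendsto (fun x => μ (B ∩ {s | ε' < UOp μ φ x g' s})) (normAtTop d) (nhds 0) :=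
        (H B hBmeas hBfin ε' hε'pos).congr fun x => hMeq x ε' B
      have hev : ∀ᶠ x in normAtTop d, μ (B ∩ {s | ε' < UOp μ φ x g' s}) < ζ :=
        hTB.eventually_lt_const hζpos
      filter_upwards [hev] with x hx
      set E : Set S := {s | ε' < UOp μ φ x g' s} with hEdef
      have hEmeas : MeasurableSet E := measurableSet_lt measurable_const (hUmeas x)
      have hbound : (fun s =>
          min ((μ.map (φ (-x))).rnDeriv μ s * ENNReal.ofReal (g' (φ x s)))
            (ENNReal.ofReal (g' s)))
          ≤ᵐ[μ] fun s => Set.indicator Bᶜ (fun u => ENNReal.ofReal (g' u)) s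
            + Set.indicator (B ∩ E) (fun u => ENNReal.ofReal (g' u)) s
            + Set.indicator (B \ E) (fun _ => ENNReal.ofReal ε') s := by
        filter_upwards [hVae x] with s hs
        by_cases hsB : s ∈ B
        · by_cases hsE : s ∈ E
          · have h1 : min ((μ.map (φ (-x))).rnDeriv μ s * ENNReal.ofReal (g' (φ x s)))
                (ENNReal.ofReal (g' s))
                ≤ Set.indicator (B ∩ E) (fun u => ENNReal.ofReal (g' u)) s := by
              have hmem : s ∈ B ∩ E := Set.mem_inter hsB hsE
              rw [Set.indicator_of_mem hmem]
              exact min_le_right _ _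
            exact le_trans h1 (le_trans (self_le_add_left _ _) (self_le_add_right _ _))
          · have h1 : min ((μ.map (φ (-x))).rnDeriv μ s * ENNReal.ofReal (g' (φ x s)))
                (ENNReal.ofReal (g' s))
                ≤ Set.indicator (B \ E) (fun _ => ENNReal.ofReal ε') s := by
              have hmem : s ∈ B \ E := (Set.mem_diff s).mpr ⟨hsB, hsE⟩
              rw [Set.indicator_of_mem hmem]
              rw [← hs] at *
              exact le_trans (min_le_left _ _)
                (ENNReal.ofReal_le_ofReal (not_lt.mp hsE))
            exact le_trans h1 (self_le_add_left _ _)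
        · have h1 : min ((μ.map (φ (-x))).rnDeriv μ s * ENNReal.ofReal (g' (φ x s)))
              (ENNReal.ofReal (g' s))
              ≤ Set.indicator Bᶜ (fun u => ENNReal.ofReal (g' u)) s := by
            have hmem : s ∈ Bᶜ := Set.mem_compl hsB
            rw [Set.indicator_of_mem hmem]
            exact min_le_right _ _
          exact le_trans h1 (le_trans (self_le_add_right _ _) (self_le_add_right _ _))
      have hcalc : L x ≤ η := by
        calc L x ≤ ∫⁻ s, (Set.indicator Bᶜ (fun u => ENNReal.ofReal (g' u)) s
              + Set.indicator (B ∩ E) (fun u => ENNReal.ofReal (g' u)) s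
              + Set.indicator (B \ E) (fun _ => ENNReal.ofReal ε') s) ∂μ :=
            lintegral_mono_ae hbound
          _ = ∫⁻ s in Bᶜ, ENNReal.ofReal (g' s) ∂μ
              + ∫⁻ s in B ∩ E, ENNReal.ofReal (g' s) ∂μ
              + ENNReal.ofReal ε' * μ (B \ E) := by
            rw [lintegral_add_left (f := fun s => Bᶜ.indicator (fun u => ENNReal.ofReal (g' u)) s + (B ∩ E).indicator (fun u => ENNReal.ofReal (g' u)) s) ((hGm.indicator hBmeas.compl).add
              (hGm.indicator (hBmeas.inter hEmeas))),
              lintegral_add_left (hGm.indicator hBmeas.compl),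
              lintegral_indicator hBmeas.compl (fun u => ENNReal.ofReal (g' u)),
              lintegral_indicator (hBmeas.inter hEmeas) (fun u => ENNReal.ofReal (g' u)),
              lintegral_indicator (hBmeas.diff hEmeas) (fun _ => ENNReal.ofReal ε'),
              setLIntegral_const]
          _ ≤ η / 3 + η / 3 + η / 3 := by
            refine add_le_add (add_le_add ?_ ?_) ?_
            · have hBc : Bᶜ = {t | g' t ≤ δ} := by
                ext t
                simp [hBdef, not_lt]
              rw [hBc]
              exact hδ
            · exact (hζ _ hx).le
            · rw [hofε']
              calc c * μ (B \ E) ≤ c * (μ B + 1) :=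
                  mul_le_mul_right ((measure_mono Set.diff_subset).trans le_self_add) c
                _ = η / 3 := ENNReal.div_mul_cancel (by simp) (by simp [hBfin.ne])
          _ = η := ENNReal.add_thirds η
      exact hcalc
    have hfinal : ∀ x, ∫ s, min (UOp μ φ x g s) (g s) ∂μ = (L x).toReal :=
      fun x => (hIeq x).trans (hIL x)
    have h2 := (ENNReal.tendsto_toReal ENNReal.zero_ne_top).comp hLT
    simp only [ENNReal.toReal_zero] at h2
    exact h2.congr fun x => (hfinal x).symm
end

section
/- Let (φ_x)_{x∈ℝ^d} be a measurable non-singular flow on a σ-finite measure space (S, 𝔅, μ) with induced positive L¹-isometries (U_x)_{x∈ℝ^d}. Let f₀ ∈ L¹(S, μ) be nonnegative with no measurable set B ⊆ {f₀ = 0} of positive μ-measure satisfying μ(φ_x(B) Δ B) = 0 for all x, and set f_x := U_x f₀. Let S = N₀ ∪ N₊ be a partition into disjoint measurable sets satisfying: (ii) for every nonnegative g ∈ L¹(S, μ) vanishing μ-a.e. outside N₀, lim_{x→∞} ∫_S min(U_x g, g) dμ = 0; and (iii) for every nonnegative h ∈ L¹(S, μ) vanishing μ-a.e. outside N₊ with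 μ({h > 0}) > 0, limsup_{x→∞} ∫_S min(U_x h, h) dμ > 0. Then lim_{x→∞} ∫_S min(f_x, f₀) dμ = 0 if and only if μ(N₊) = 0. -/
open MeasureTheory Filter
open scoped ENNReal
set_option linter.unusedSectionVars false
set_option maxHeartbeats 1000000

section Aux

variable {d : ℕ} {S : Type*} [MeasurableSpace S] {μ : Measure S} [SigmaFinite μ]
  {φ : (Fin d → ℝ) → S → S}

lemma ennreal_mul_min (c a b : ℝ≥0∞) : c * min a b = min (c * a) (c * b) := by
  rcases le_total a b with h | h
  · rw [min_eq_left h, min_eq_left (mul_le_mul_right h c)]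
  · rw [min_eq_right h, min_eq_right (mul_le_mul_right h c)]

lemma ennreal_ofReal_min (a b : ℝ) :
    ENNReal.ofReal (min a b) = min (ENNReal.ofReal a) (ENNReal.ofReal b) := by
  rcases le_total a b with h | h
  · rw [min_eq_left h, min_eq_left (ENNReal.ofReal_le_ofReal h)]
  · rw [min_eq_right h, min_eq_right (ENNReal.ofReal_le_ofReal h)]

lemma flow_inv (hφ0 : ∀ s, φ 0 s = s) (hφadd : ∀ x y s, φ (x + y) s = φ y (φ x s))
    (x : Fin d → ℝ) (s : S) : φ (-x) (φ x s) = s := by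
  rw [← hφadd x (-x) s, add_neg_cancel, hφ0]

lemma flow_comp_inv (hφ0 : ∀ s, φ 0 s = s) (hφadd : ∀ x y s, φ (x + y) s = φ y (φ x s))
    (x : Fin d → ℝ) : φ (-x) ∘ φ x = id :=
  funext fun s => flow_inv hφ0 hφadd x s

lemma flow_inj (hφ0 : ∀ s, φ 0 s = s) (hφadd : ∀ x y s, φ (x + y) s = φ y (φ x s))
    (x : Fin d → ℝ) : Function.Injective (φ x) :=
  Function.LeftInverse.injective (g := φ (-x)) (fun s => flow_inv hφ0 hφadd x s)

/-- image under `φ x` equals preimage under `φ (-x)`. -/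
lemma flow_image (hφ0 : ∀ s, φ 0 s = s) (hφadd : ∀ x y s, φ (x + y) s = φ y (φ x s))
    (x : Fin d → ℝ) (A : Set S) : φ x '' A = φ (-x) ⁻¹' A := by
  ext t
  constructor
  · rintro ⟨s, hs, rfl⟩
    simpa [flow_inv hφ0 hφadd x s] using hs
  · intro ht
    exact ⟨φ (-x) t, ht, by simpa using flow_inv hφ0 hφadd (-x) t⟩

lemma sigmaFinite_map (hφm : ∀ x, Measurable (φ x)) (hφ0 : ∀ s, φ 0 s = s)
    (hφadd : ∀ x y s, φ (x + y) s = φ y (φ x s)) (x : Fin d → ℝ) :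
    SigmaFinite (μ.map (φ x)) := by
  refine ⟨⟨⟨fun n => φ (-x) ⁻¹' spanningSets μ n, fun _ => trivial, ?_, ?_⟩⟩⟩
  · intro n
    rw [Measure.map_apply (hφm x) ((measurableSet_spanningSets μ n).preimage (hφm (-x))),
      ← Set.preimage_comp, flow_comp_inv hφ0 hφadd, Set.preimage_id]
    exact measure_spanningSets_lt_top μ n
  · rw [← Set.preimage_iUnion, iUnion_spanningSets, Set.preimage_univ]

/-- the Radon–Nikodym cocycle of the flow, `ENNReal` valued. -/
noncomputable def om (μ : Measure S) (φ : (Fin d → ℝ) → S → S) (x : Fin d → ℝ) (s : S) : ℝ≥0∞ :=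
  (μ.map (φ (-x))).rnDeriv μ s

lemma om_measurable (x : Fin d → ℝ) : Measurable (om μ φ x) :=
  Measure.measurable_rnDeriv _ _

/-- `U_x` preserves the (lower) integral of nonnegative measurable functions. -/
lemma lintegral_om_mul (hφm : ∀ x, Measurable (φ x)) (hφ0 : ∀ s, φ 0 s = s)
    (hφadd : ∀ x y s, φ (x + y) s = φ y (φ x s))
    (hns : ∀ x, μ.map (φ x) ≪ μ ∧ μ ≪ μ.map (φ x))
    (x : Fin d → ℝ) {g : S → ℝ≥0∞} (hg : Measurable g) :
    ∫⁻ s, om μ φ x s * g (φ x s) ∂μ = ∫⁻ s, g s ∂μ := by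
  have : SigmaFinite (μ.map (φ (-x))) := sigmaFinite_map hφm hφ0 hφadd (-x)
  simp only [om]
  rw [lintegral_rnDeriv_mul (hns (-x)).1
      (show Measurable fun s => g (φ x s) from hg.comp (hφm x)).aemeasurable,
    lintegral_map (show Measurable fun s => g (φ x s) from hg.comp (hφm x)) (hφm (-x))]
  congr 1
  funext s
  rw [show φ x (φ (-x) s) = s by simpa using flow_inv hφ0 hφadd (-x) s]

/-- chain rule / cocycle identity for the Radon–Nikodym derivatives. -/
lemma om_cocycle (hφm : ∀ x, Measurable (φ x)) (hφ0 : ∀ s, φ 0 s = s)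
    (hφadd : ∀ x y s, φ (x + y) s = φ y (φ x s))
    (hns : ∀ x, μ.map (φ x) ≪ μ ∧ μ ≪ μ.map (φ x))
    (a b : Fin d → ℝ) :
    (fun s => om μ φ a s * om μ φ b (φ a s)) =ᵐ[μ] om μ φ (a + b) := by
  have hSF : ∀ z : Fin d → ℝ, SigmaFinite (μ.map (φ (-z))) :=
    fun z => sigmaFinite_map hφm hφ0 hφadd (-z)
  have hSFa := hSF a; have hSFb := hSF b; have hSFab := hSF (a + b)
  refine ae_eq_of_forall_setLIntegral_eq_of_sigmaFinite
    ((om_measurable a).mul ((om_measurable b).comp (hφm a)))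
    (om_measurable (a + b)) (fun A hA _ => ?_)
  have h1 : ∫⁻ s in A, om μ φ a s * om μ φ b (φ a s) ∂μ
      = ∫⁻ s in A, om μ φ b (φ a s) ∂(μ.map (φ (-a))) := by
    simp only [om]
    exact setLIntegral_rnDeriv_mul (hns (-a)).1
      (show Measurable fun s => om μ φ b (φ a s) from (om_measurable b).comp (hφm a)).aemeasurable hA
  have h2 : ∫⁻ s in A, om μ φ b (φ a s) ∂(μ.map (φ (-a)))
      = ∫⁻ t in φ (-a) ⁻¹' A, om μ φ b t ∂μ := by
    rw [setLIntegral_map hA (show Measurable fun s => om μ φ b (φ a s) from (om_measurable b).comp (hφm a)) (hφm (-a))]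
    refine setLIntegral_congr_fun (hA.preimage (hφm (-a))) (fun t _ => ?_)
    show om μ φ b (φ a (φ (-a) t)) = om μ φ b t
    rw [show φ a (φ (-a) t) = t by simpa using flow_inv hφ0 hφadd (-a) t]
  have h3 : ∫⁻ t in φ (-a) ⁻¹' A, om μ φ b t ∂μ = (μ.map (φ (-b))) (φ (-a) ⁻¹' A) := by
    simp only [om]
    exact Measure.setLIntegral_rnDeriv' (hns (-b)).1 (hA.preimage (hφm (-a)))
  have h4 : (μ.map (φ (-b))) (φ (-a) ⁻¹' A) = (μ.map (φ (-(a + b)))) A := by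
    rw [Measure.map_apply (hφm (-b)) (hA.preimage (hφm (-a))),
      Measure.map_apply (hφm (-(a + b))) hA]
    congr 1
    ext s
    simp only [Set.mem_preimage]
    rw [show φ (-a) (φ (-b) s) = φ (-(a + b)) s by rw [← hφadd (-b) (-a) s, ← neg_add_rev]]
  have h5 : ∫⁻ s in A, om μ φ (a + b) s ∂μ = (μ.map (φ (-(a + b)))) A := by
    simp only [om]
    exact Measure.setLIntegral_rnDeriv' (hns (-(a + b))).1 hA
  rw [h1, h2, h3, h4, h5]

/-- the key conjugation identity used in Case A. -/
lemma caseA_core (hφm : ∀ x, Measurable (φ x)) (hφ0 : ∀ s, φ 0 s = s)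
    (hφadd : ∀ x y s, φ (x + y) s = φ y (φ x s))
    (hns : ∀ x, μ.map (φ x) ≪ μ ∧ μ ≪ μ.map (φ x))
    {f : S → ℝ≥0∞} (hf : Measurable f) (x₀ x : Fin d → ℝ) :
    ∫⁻ s, min (om μ φ x s * (om μ φ x₀ (φ x s) * f (φ x₀ (φ x s))))
        (om μ φ x₀ s * f (φ x₀ s)) ∂μ
      = ∫⁻ s, min (om μ φ x s * f (φ x s)) (f s) ∂μ := by
  have E1 := om_cocycle hφm hφ0 hφadd hns x x₀
  have E2 := om_cocycle hφm hφ0 hφadd hns x₀ x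
  have step1 : ∫⁻ s, min (om μ φ x s * (om μ φ x₀ (φ x s) * f (φ x₀ (φ x s))))
        (om μ φ x₀ s * f (φ x₀ s)) ∂μ
      = ∫⁻ s, min (om μ φ x₀ s * (om μ φ x (φ x₀ s) * f (φ x (φ x₀ s))))
        (om μ φ x₀ s * f (φ x₀ s)) ∂μ := by
    refine lintegral_congr_ae ?_
    filter_upwards [E1, E2] with s h1 h2
    congr 1
    rw [← mul_assoc, h1, ← hφadd x x₀ s, ← mul_assoc, h2, ← hφadd x₀ x s, add_comm x₀ x]
  rw [step1]
  have step2 : ∫⁻ s, min (om μ φ x₀ s * (om μ φ x (φ x₀ s) * f (φ x (φ x₀ s))))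
        (om μ φ x₀ s * f (φ x₀ s)) ∂μ
      = ∫⁻ s, om μ φ x₀ s * (fun t => min (om μ φ x t * f (φ x t)) (f t)) (φ x₀ s) ∂μ := by
    refine lintegral_congr fun s => ?_
    rw [ennreal_mul_min]
  rw [step2]
  exact lintegral_om_mul hφm hφ0 hφadd hns x₀
    ((((om_measurable x).mul (hf.comp (hφm x)))).min hf)

end Aux


/-- Theorem 5.3 (flow-theoretic form): given the mixing/non-mixing decomposition
`S = N₀ ∪ N₊` of a measurable non-singular flow, and a nonnegative full-support
`f₀ ∈ L¹(μ)` with `f_x := U_x f₀`, one has `∫ min(f_x, f₀) dμ → 0` as `x → ∞`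
iff `μ(N₊) = 0`. -/
theorem stmt6 {d : ℕ} (hd : 1 ≤ d) {S : Type*} [MeasurableSpace S]
    (μ : Measure S) [SigmaFinite μ]
    (φ : (Fin d → ℝ) → S → S)
    (hφmeas : Measurable fun p : (Fin d → ℝ) × S => φ p.1 p.2)
    (hφm : ∀ x, Measurable (φ x))
    (hφ0 : ∀ s, φ 0 s = s)
    (hφadd : ∀ x y s, φ (x + y) s = φ y (φ x s))
    (hns : ∀ x, μ.map (φ x) ≪ μ ∧ μ ≪ μ.map (φ x))
    (f₀ : S → ℝ) (hf₀ : Integrable f₀ μ) (hf₀nn : ∀ s, 0 ≤ f₀ s)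
    (hfull : ¬ ∃ B : Set S, MeasurableSet B ∧ B ⊆ {s | f₀ s = 0} ∧ 0 < μ B ∧
      ∀ x : Fin d → ℝ, μ (symmDiff (φ x '' B) B) = 0)
    (N0 Nplus : Set S)
    (hN0 : MeasurableSet N0) (hNplus : MeasurableSet Nplus)
    (hdisj : Disjoint N0 Nplus) (hunion : N0 ∪ Nplus = Set.univ)
    (h2 : ∀ g : S → ℝ, Integrable g μ → (∀ s, 0 ≤ g s) →
      (∀ᵐ s ∂μ, s ∉ N0 → g s = 0) →
      Tendsto (fun x => ∫ s, min (UOp μ φ x g s) (g s) ∂μ) (normAtTop d) (nhds 0))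
    (h3 : ∀ h : S → ℝ, Integrable h μ → (∀ s, 0 ≤ h s) →
      (∀ᵐ s ∂μ, s ∉ Nplus → h s = 0) → 0 < μ {s | 0 < h s} →
      0 < Filter.limsup (fun x => ∫ s, min (UOp μ φ x h s) (h s) ∂μ) (normAtTop d)) :
    Tendsto (fun x => ∫ s, min (UOp μ φ x f₀ s) (f₀ s) ∂μ) (normAtTop d) (nhds 0) ↔
      μ Nplus = 0 := by
  classical
  have hSF : ∀ z : Fin d → ℝ, SigmaFinite (μ.map (φ z)) :=
    fun z => sigmaFinite_map hφm hφ0 hφadd z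
  haveI hFd : Nonempty (Fin d) := ⟨⟨0, hd⟩⟩
  haveI hne : (normAtTop d).NeBot := by
    refine Filter.comap_neBot fun t ht => ?_
    obtain ⟨a, ha⟩ := mem_atTop_sets.mp ht
    refine ⟨fun _ => max a 0, ha _ ?_⟩
    rw [pi_norm_const (max a 0), Real.norm_eq_abs, abs_of_nonneg (le_max_right a 0)]
    exact le_max_left a 0
  -- measurable nonnegative representative of f₀
  set f₀' : S → ℝ := fun s => max (hf₀.1.mk f₀ s) 0 with hf₀'def
  have hf₀'meas : Measurable f₀' := hf₀.1.stronglyMeasurable_mk.measurable.max measurable_const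
  have hf₀'nn : ∀ s, 0 ≤ f₀' s := fun s => le_max_right _ _
  have hf₀'ae : f₀ =ᵐ[μ] f₀' := by
    filter_upwards [hf₀.1.ae_eq_mk] with s hs
    show f₀ s = max (hf₀.1.mk f₀ s) 0
    rw [← hs]
    exact (max_eq_left (hf₀nn s)).symm
  set f : S → ℝ≥0∞ := fun s => ENNReal.ofReal (f₀' s) with hfdef
  have hfmeas : Measurable f := hf₀'meas.ennreal_ofReal
  have hfint : ∫⁻ s, f s ∂μ < ∞ := by
    have h1 : ∫⁻ s, f s ∂μ = ∫⁻ s, ENNReal.ofReal (f₀ s) ∂μ :=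
      lintegral_congr_ae (hf₀'ae.fun_comp ENNReal.ofReal).symm
    rw [h1]
    calc ∫⁻ s, ENNReal.ofReal (f₀ s) ∂μ ≤ ∫⁻ s, (‖f₀ s‖₊ : ℝ≥0∞) ∂μ :=
          lintegral_mono fun s => Real.ofReal_le_enorm _
      _ < ∞ := hf₀.2
  have hompos : ∀ x, ∀ᵐ s ∂μ, 0 < om μ φ x s := by
    intro x
    haveI := hSF (-x)
    exact Measure.rnDeriv_pos' (hns (-x)).2
  have homfin : ∀ x, ∀ᵐ s ∂μ, om μ φ x s < ∞ := by
    intro x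
    haveI := hSF (-x)
    exact Measure.rnDeriv_lt_top _ _
  -- null set where f₀ and f₀' differ
  have hnull : μ {s | ¬ f₀ s = f₀' s} = 0 := by
    have h := hf₀'ae
    rwa [Filter.EventuallyEq, ae_iff] at h
  set M : Set S := toMeasurable μ {s | ¬ f₀ s = f₀' s} with hMdef
  have hMmeas : MeasurableSet M := measurableSet_toMeasurable μ _
  have hMnull : μ M = 0 := by rw [hMdef, measure_toMeasurable]; exact hnull
  have hMsub : ∀ s, s ∉ M → f₀ s = f₀' s := fun s hs => by
    by_contra h; exact hs (subset_toMeasurable μ _ h)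
  have hprenull : ∀ x : Fin d → ℝ, μ (φ x ⁻¹' M) = 0 := fun x => by
    rw [← Measure.map_apply (hφm x) hMmeas]
    exact (hns x).1 hMnull
  -- congruence for the integrand
  have hUae : ∀ x, (fun s => min (UOp μ φ x f₀ s) (f₀ s)) =ᵐ[μ]
      (fun s => min (UOp μ φ x f₀' s) (f₀' s)) := by
    intro x
    have h1 : ∀ᵐ s ∂μ, φ x s ∉ M := by
      rw [ae_iff]
      simp only [not_not]; exact hprenull x
    filter_upwards [h1, hf₀'ae] with s hs1 hs2
    rw [show UOp μ φ x f₀ s = UOp μ φ x f₀' s by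
      simp only [UOp]; rw [hMsub _ hs1], hs2]
  have hUOp'meas : ∀ g : S → ℝ, Measurable g → ∀ x, Measurable (UOp μ φ x g) := by
    intro g hg x
    exact ((Measure.measurable_rnDeriv _ _).ennreal_toReal).mul (hg.comp (hφm x))
  have hUOp'nn : ∀ g : S → ℝ, (∀ s, 0 ≤ g s) → ∀ x s, 0 ≤ UOp μ φ x g s := by
    intro g hg x s
    exact mul_nonneg ENNReal.toReal_nonneg (hg _)
  -- the main integral identity
  have haxJ : ∀ x, ∫ s, min (UOp μ φ x f₀ s) (f₀ s) ∂μ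
      = (∫⁻ s, min (om μ φ x s * f (φ x s)) (f s) ∂μ).toReal := by
    intro x
    rw [integral_congr_ae (hUae x),
      integral_eq_lintegral_of_nonneg_ae
        (ae_of_all _ fun s => le_min (hUOp'nn f₀' hf₀'nn x s) (hf₀'nn s))
        (((hUOp'meas f₀' hf₀'meas x).min hf₀'meas).aestronglyMeasurable)]
    congr 1
    refine lintegral_congr_ae ?_
    filter_upwards [homfin x] with s hfin
    rw [ennreal_ofReal_min]
    congr 1
    rw [show UOp μ φ x f₀' s = (om μ φ x s).toReal * f₀' (φ x s) from rfl,
      ENNReal.ofReal_mul ENNReal.toReal_nonneg, ENNReal.ofReal_toReal hfin.ne]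
  have hJfin : ∀ x, ∫⁻ s, min (om μ φ x s * f (φ x s)) (f s) ∂μ ≠ ∞ := fun x =>
    (lt_of_le_of_lt (lintegral_mono fun s => min_le_right _ _) hfint).ne
  constructor
  · -- forward direction
    intro T
    by_contra hNp
    by_cases hA : ∃ x₀ : Fin d → ℝ, μ {s | s ∈ Nplus ∧ 0 < f₀' (φ x₀ s)} ≠ 0
    · -- Case A
      obtain ⟨x₀, hx₀⟩ := hA
      set hR : S → ℝ := Nplus.indicator (fun s => (om μ φ x₀ s).toReal * f₀' (φ x₀ s)) with hRdef
      have hRmeas : Measurable hR :=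
        (((Measure.measurable_rnDeriv _ _).ennreal_toReal).mul
          (hf₀'meas.comp (hφm x₀))).indicator hNplus
      have hRnn : ∀ s, 0 ≤ hR s := fun s =>
        Set.indicator_nonneg (fun t _ => mul_nonneg ENNReal.toReal_nonneg (hf₀'nn _)) s
      have hRle : ∀ s, ENNReal.ofReal (hR s) ≤ om μ φ x₀ s * f (φ x₀ s) := by
        intro s
        rw [hRdef]
        by_cases hs : s ∈ Nplus
        · rw [Set.indicator_of_mem hs, ENNReal.ofReal_mul ENNReal.toReal_nonneg]
          exact mul_le_mul_left ENNReal.ofReal_toReal_le _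
        · rw [Set.indicator_of_notMem hs]
          simp
      have hRint : Integrable hR μ := by
        refine ⟨hRmeas.aestronglyMeasurable, ?_⟩
        show ∫⁻ s, (‖hR s‖₊ : ℝ≥0∞) ∂μ < ∞
        calc ∫⁻ s, (‖hR s‖₊ : ℝ≥0∞) ∂μ = ∫⁻ s, ENNReal.ofReal (hR s) ∂μ :=
              lintegral_congr fun s => Real.enorm_eq_ofReal (hRnn s)
          _ ≤ ∫⁻ s, om μ φ x₀ s * f (φ x₀ s) ∂μ := lintegral_mono hRle
          _ = ∫⁻ s, f s ∂μ := lintegral_om_mul hφm hφ0 hφadd hns x₀ hfmeas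
          _ < ∞ := hfint
      have hRsupp : ∀ᵐ s ∂μ, s ∉ Nplus → hR s = 0 :=
        ae_of_all _ fun s hs => Set.indicator_of_notMem hs _
      have hRpos : 0 < μ {s | 0 < hR s} := by
        have hsub : {s | s ∈ Nplus ∧ 0 < f₀' (φ x₀ s)} ∩
            {s | 0 < om μ φ x₀ s ∧ om μ φ x₀ s < ∞} ⊆ {s | 0 < hR s} := by
          rintro s ⟨⟨h1, h2⟩, h3, h4⟩
          simp only [Set.mem_setOf_eq, hRdef]
          rw [Set.indicator_of_mem h1]
          exact mul_pos (ENNReal.toReal_pos h3.ne' h4.ne) h2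
        have hcompl : μ ({s | 0 < om μ φ x₀ s ∧ om μ φ x₀ s < ∞}ᶜ) = 0 := by
          have h := (hompos x₀).and (homfin x₀)
          rw [ae_iff] at h
          exact h
        have hkey : μ {s | s ∈ Nplus ∧ 0 < f₀' (φ x₀ s)}
            ≤ μ ({s | s ∈ Nplus ∧ 0 < f₀' (φ x₀ s)} ∩
              {s | 0 < om μ φ x₀ s ∧ om μ φ x₀ s < ∞}) := by
          calc μ {s | s ∈ Nplus ∧ 0 < f₀' (φ x₀ s)}
              ≤ μ ({s | s ∈ Nplus ∧ 0 < f₀' (φ x₀ s)} ∩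
                  {s | 0 < om μ φ x₀ s ∧ om μ φ x₀ s < ∞}) +
                μ ({s | 0 < om μ φ x₀ s ∧ om μ φ x₀ s < ∞}ᶜ) := by
                refine le_trans (measure_mono ?_) (measure_union_le _ _)
                intro s hs
                by_cases h : 0 < om μ φ x₀ s ∧ om μ φ x₀ s < ∞
                · exact Or.inl ⟨hs, h⟩
                · exact Or.inr h
            _ = _ := by rw [hcompl, add_zero]
        have := lt_of_lt_of_le (lt_of_lt_of_le (pos_iff_ne_zero.mpr hx₀) hkey)
          (measure_mono hsub)
        exact this
      have hlimsup := h3 hR hRint hRnn hRsupp hRpos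
      have hbound : ∀ x, ∫ s, min (UOp μ φ x hR s) (hR s) ∂μ
          ≤ ∫ s, min (UOp μ φ x f₀ s) (f₀ s) ∂μ := by
        intro x
        rw [haxJ x,
          integral_eq_lintegral_of_nonneg_ae
            (ae_of_all _ fun s => le_min (hUOp'nn hR hRnn x s) (hRnn s))
            (((hUOp'meas hR hRmeas x).min hRmeas).aestronglyMeasurable)]
        refine ENNReal.toReal_mono (hJfin x) ?_
        calc ∫⁻ s, ENNReal.ofReal (min (UOp μ φ x hR s) (hR s)) ∂μ
            ≤ ∫⁻ s, min (om μ φ x s * (om μ φ x₀ (φ x s) * f (φ x₀ (φ x s))))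
                (om μ φ x₀ s * f (φ x₀ s)) ∂μ := by
              refine lintegral_mono fun s => ?_
              rw [ennreal_ofReal_min]
              refine min_le_min ?_ (hRle s)
              rw [show UOp μ φ x hR s = (om μ φ x s).toReal * hR (φ x s) from rfl,
                ENNReal.ofReal_mul ENNReal.toReal_nonneg]
              exact mul_le_mul' ENNReal.ofReal_toReal_le (hRle (φ x s))
          _ = ∫⁻ s, min (om μ φ x s * f (φ x s)) (f s) ∂μ :=
              caseA_core hφm hφ0 hφadd hns hfmeas x₀ x
      have hL2 : limsup (fun x => ∫ s, min (UOp μ φ x hR s) (hR s) ∂μ) (normAtTop d)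
          ≤ limsup (fun x => ∫ s, min (UOp μ φ x hR s) (hR s) ∂μ) (normAtTop d) / 2 := by
        refine limsup_le_of_le ?_ ?_
        · exact isCoboundedUnder_le_of_le _ (fun x =>
            integral_nonneg fun s => le_min (hUOp'nn hR hRnn x s) (hRnn s))
        · filter_upwards [T.eventually_lt_const (half_pos hlimsup)] with x hx
          exact (hbound x).trans hx.le
      have : limsup (fun x => ∫ s, min (UOp μ φ x hR s) (hR s) ∂μ) (normAtTop d) ≤ 0 := by
        linarith
      linarith
    · -- Case B
      have hA' : ∀ x : Fin d → ℝ, μ {s | s ∈ Nplus ∧ 0 < f₀' (φ x s)} = 0 :=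
        fun x => of_not_not (fun h => hA ⟨x, h⟩)
      have hIntMeas : Measurable fun s => ∫⁻ x, f (φ x s) ∂(volume : Measure (Fin d → ℝ)) :=
        Measurable.lintegral_prod_left (hfmeas.comp hφmeas)
      set B : Set S := {s | ∫⁻ x, f (φ x s) ∂(volume : Measure (Fin d → ℝ)) = 0} with hBdef
      have hBmeas : MeasurableSet B := hIntMeas (measurableSet_singleton 0)
      have hBinv : ∀ y s, φ y s ∈ B ↔ s ∈ B := by
        intro y s
        have hg : Measurable fun x : Fin d → ℝ => f (φ x s) :=
          hfmeas.comp (hφmeas.comp (measurable_id.prodMk measurable_const))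
        have key : ∫⁻ x, f (φ x (φ y s)) ∂(volume : Measure (Fin d → ℝ))
            = ∫⁻ x, f (φ x s) ∂volume := by
          have h1 : (fun x => f (φ x (φ y s))) = fun x => f (φ (y + x) s) := by
            funext x
            rw [hφadd y x s]
          rw [h1]
          exact (measurePreserving_add_left (volume : Measure (Fin d → ℝ)) y).lintegral_comp hg
        simp only [hBdef, Set.mem_setOf_eq, key]
      have hBimg : ∀ y, φ y '' B = B := by
        intro y
        rw [flow_image hφ0 hφadd]
        ext t
        simp only [Set.mem_preimage]
        exact hBinv (-y) t
      have huncur : Measurable fun p : S × (Fin d → ℝ) => f (φ p.2 p.1) :=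
        hfmeas.comp (hφmeas.comp measurable_swap)
      have hfzero : ∀ x : Fin d → ℝ, ∀ᵐ s ∂μ, s ∈ Nplus → f (φ x s) = 0 := by
        intro x
        rw [ae_iff]
        refine measure_mono_null ?_ (hA' x)
        intro s hs
        simp only [Set.mem_setOf_eq, _root_.not_imp] at hs ⊢
        refine ⟨hs.1, ?_⟩
        rcases lt_or_eq_of_le (hf₀'nn (φ x s)) with h | h
        · exact h
        · exact absurd (by rw [hfdef]; simp [← h]) hs.2
      have hNB : μ (Nplus \ B) = 0 := by
        have hswap : ∫⁻ s, ∫⁻ x, f (φ x s) ∂(volume : Measure (Fin d → ℝ)) ∂(μ.restrict Nplus)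
            = ∫⁻ x, ∫⁻ s, f (φ x s) ∂(μ.restrict Nplus) ∂(volume : Measure (Fin d → ℝ)) :=
          lintegral_lintegral_swap huncur.aemeasurable
        have hz : ∀ x : Fin d → ℝ, ∫⁻ s, f (φ x s) ∂(μ.restrict Nplus) = 0 := by
          intro x
          rw [lintegral_eq_zero_iff (show Measurable fun s => f (φ x s) from hfmeas.comp (hφm x))]
          exact (ae_restrict_iff' hNplus).mpr (hfzero x)
        have hzero : ∫⁻ s, ∫⁻ x, f (φ x s) ∂(volume : Measure (Fin d → ℝ)) ∂(μ.restrict Nplus) = 0 := by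
          rw [hswap]
          simp [hz]
        have h := (lintegral_eq_zero_iff hIntMeas).mp hzero
        have h2 : ∀ᵐ s ∂μ, s ∈ Nplus → s ∈ B := by
          have := (ae_restrict_iff' hNplus).mp h
          filter_upwards [this] with s hs hsN
          exact hs hsN
        refine measure_mono_null ?_ (ae_iff.mp h2)
        intro s hs
        simp only [Set.mem_setOf_eq, _root_.not_imp]
        exact ⟨hs.1, hs.2⟩
      have hvolne : (volume : Measure (Fin d → ℝ)) ≠ 0 := by
        intro h0
        refine isOpen_univ.measure_ne_zero (volume : Measure (Fin d → ℝ)) Set.univ_nonempty ?_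
        rw [h0]
        rfl
      haveI : NeBot (ae (volume : Measure (Fin d → ℝ))) := ae_neBot.mpr hvolne
      have hvol : ∀ᵐ x ∂(volume : Measure (Fin d → ℝ)), ∫⁻ s, f (φ x s) ∂(μ.restrict B) = 0 := by
        have hm : Measurable fun x : Fin d → ℝ => ∫⁻ s, f (φ x s) ∂(μ.restrict B) :=
          Measurable.lintegral_prod_right (hfmeas.comp hφmeas)
        have h0 : (fun x : Fin d → ℝ => ∫⁻ s, f (φ x s) ∂(μ.restrict B)) =ᵐ[volume] 0 := by
          rw [← lintegral_eq_zero_iff hm]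
          rw [← lintegral_lintegral_swap (μ := μ.restrict B) huncur.aemeasurable]
          calc ∫⁻ s, ∫⁻ x, f (φ x s) ∂(volume : Measure (Fin d → ℝ)) ∂(μ.restrict B)
              = ∫⁻ s, 0 ∂(μ.restrict B) := by
                refine lintegral_congr_ae ((ae_restrict_iff' hBmeas).mpr (ae_of_all _ ?_))
                intro s hs
                exact hs
            _ = 0 := lintegral_zero
        filter_upwards [h0] with x hx
        simpa using hx
      obtain ⟨x₁, hx₁⟩ := hvol.exists
      have hBf : μ (B ∩ {s | f₀' s ≠ 0}) = 0 := by
        have h1 : ∀ᵐ s ∂μ, s ∈ B → f (φ x₁ s) = 0 := by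
          rw [lintegral_eq_zero_iff (show Measurable fun s => f (φ x₁ s) from hfmeas.comp (hφm x₁))] at hx₁
          exact (ae_restrict_iff' hBmeas).mp hx₁
        have h2 : μ (B ∩ {s | f₀' (φ x₁ s) ≠ 0}) = 0 := by
          refine measure_mono_null ?_ (ae_iff.mp h1)
          rintro s ⟨hsB, hsf⟩
          simp only [Set.mem_setOf_eq, _root_.not_imp]
          refine ⟨hsB, fun hc => hsf ?_⟩
          rw [hfdef] at hc
          simp only [ENNReal.ofReal_eq_zero] at hc
          exact le_antisymm hc (hf₀'nn _)
        have hmeasne : MeasurableSet {s | f₀' s ≠ 0} :=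
          (hf₀'meas (measurableSet_singleton 0)).compl
        have hpre : φ x₁ ⁻¹' (B ∩ {s | f₀' s ≠ 0}) = B ∩ {s | f₀' (φ x₁ s) ≠ 0} := by
          rw [Set.preimage_inter]
          congr 1
          ext s
          exact hBinv x₁ s
        refine (hns x₁).2 ?_
        rw [Measure.map_apply (hφm x₁) (hBmeas.inter hmeasne), hpre]
        exact h2
      -- contradiction with hfull
      have hmeasne : MeasurableSet {s | f₀' s ≠ 0} :=
        (hf₀'meas (measurableSet_singleton 0)).compl
      set Bad : Set S := M ∪ (B ∩ {s | f₀' s ≠ 0}) with hBaddef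
      have hBadmeas : MeasurableSet Bad := hMmeas.union (hBmeas.inter hmeasne)
      have hBadnull : μ Bad = 0 := measure_union_null hMnull hBf
      refine hfull ⟨B \ Bad, hBmeas.diff hBadmeas, ?_, ?_, ?_⟩
      · rintro s ⟨hsB, hsBad⟩
        have h1 : f₀ s = f₀' s := hMsub s (fun h => hsBad (Set.mem_union_left _ h))
        have h2 : f₀' s = 0 := by
          by_contra h
          exact hsBad (Set.mem_union_right _ ⟨hsB, h⟩)
        show f₀ s = 0
        rw [h1, h2]
      · rw [measure_diff_null hBadnull]
        have hle : μ Nplus ≤ μ B := by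
          calc μ Nplus ≤ μ (Nplus \ B) + μ (Nplus ∩ B) := by
                refine le_trans (measure_mono ?_) (measure_union_le _ _)
                intro s hs
                by_cases h : s ∈ B
                · exact Or.inr ⟨hs, h⟩
                · exact Or.inl ⟨hs, h⟩
            _ = μ (Nplus ∩ B) := by rw [hNB, zero_add]
            _ ≤ μ B := measure_mono Set.inter_subset_right
        exact lt_of_lt_of_le (pos_iff_ne_zero.mpr hNp) hle
      · intro x
        have hdiffeq : B \ Bad = B \ (B ∩ Bad) := (Set.diff_self_inter).symm
        have himg : φ x '' (B \ Bad) = B \ φ x '' (B ∩ Bad) := by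
          rw [hdiffeq, Set.image_diff (flow_inj hφ0 hφadd x), hBimg x]
        have hsub : symmDiff (φ x '' (B \ Bad)) (B \ Bad) ⊆ (φ x '' (B ∩ Bad)) ∪ Bad := by
          rw [himg]
          intro s hs
          rw [Set.mem_symmDiff] at hs
          rcases hs with ⟨⟨hsB, hsP⟩, hns2⟩ | ⟨⟨hsB, hsBad⟩, hns2⟩
          · right
            by_contra hc
            exact hns2 ⟨hsB, hc⟩
          · left
            by_contra hc
            exact hns2 ⟨hsB, hc⟩
        refine measure_mono_null hsub ?_
        refine measure_union_null ?_ hBadnull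
        rw [flow_image hφ0 hφadd, ← Measure.map_apply (hφm (-x)) (hBmeas.inter hBadmeas)]
        exact (hns (-x)).1 (measure_mono_null Set.inter_subset_right hBadnull)
  · -- backward direction
    intro hNp
    refine h2 f₀ hf₀ hf₀nn ?_
    have hae : ∀ᵐ s ∂μ, s ∉ Nplus := by
      rw [ae_iff]
      simpa using hNp
    filter_upwards [hae] with s hs hsN0
    have hm : s ∈ N0 ∪ Nplus := by rw [hunion]; trivial
    rcases hm with h | h
    · exact absurd h hsN0
    · exact absurd h hs
end

section
/- Let (S, 𝔅, μ) be a σ-finite measure space and let (φ_x)_{x∈ℤ^d} be a non-singular ℤ^d-action on S, with induced positive L¹-isometries (U_x)_{x∈ℤ^d}. Assume that every finite measure ρ on (S, 𝔅) that is absolutely continuous with respect to μ and invariant under the action (i.e. ρ(φ_x⁻¹(A)) = ρ(A) for all x ∈ ℤ^d and measurable A) is the zero measure. Let f₀ ∈ L¹(S, μ) be nonnegative and set f_x := U_x f₀. Then, with B_r = {−r, …, r}^d ⊆ ℤ^d, liminf_{r→∞} (1/#B_r) Σ_{x∈B_r} f_x(s) = 0 for μ-a.e. s ∈ S. -/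
open MeasureTheory Filter
open scoped ENNReal

-- helper: pushforward of withDensity
lemma aux_map_withDensity {S : Type*} [MeasurableSpace S] (μ : Measure S)
    (ψ χ : S → S) (hψ : Measurable ψ) (hχ : Measurable χ)
    (hinv : ∀ s, χ (ψ s) = s) (g : S → ℝ≥0∞) (hg : Measurable g) :
    (μ.withDensity g).map ψ = (μ.map ψ).withDensity (g ∘ χ) := by
  ext A hA
  rw [Measure.map_apply hψ hA, withDensity_apply _ (hψ hA), withDensity_apply _ hA,
    setLIntegral_map hA (hg.comp hχ) hψ]
  refine setLIntegral_congr_fun (hψ hA) (fun s _ => ?_)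
  simp [hinv s]

-- helper: ennreal div juggling
lemma aux_div_div (a b c : ℝ≥0∞) (hb : b ≠ 0) (hb' : b ≠ ∞) :
    a / c = a / b * (b / c) := by
  rw [div_eq_mul_inv, div_eq_mul_inv, div_eq_mul_inv, mul_assoc]
  congr 1
  rw [← mul_assoc, ENNReal.inv_mul_cancel hb hb', one_mul]

-- helper: tendsto of box ratio
lemma aux_ratio_tendsto (d k : ℕ) :
    Tendsto (fun r : ℕ => (((2 * (r + k) + 1) ^ d : ℕ) : ℝ≥0∞) / (((2 * r + 1) ^ d : ℕ) : ℝ≥0∞))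
      atTop (nhds 1) := by
  have h1 : Tendsto (fun r : ℕ => (2 * (r : ℝ) + 1)) atTop atTop := by
    apply tendsto_atTop_add_const_right
    exact (tendsto_natCast_atTop_atTop).const_mul_atTop two_pos
  have h2 : Tendsto (fun r : ℕ => (2 * (k : ℝ)) / (2 * (r : ℝ) + 1)) atTop (nhds 0) :=
    tendsto_const_nhds.div_atTop h1
  have h3 : Tendsto (fun r : ℕ => ((2 * ((r : ℝ) + (k : ℝ)) + 1) / (2 * (r : ℝ) + 1)) ^ d)
      atTop (nhds 1) := by
    have h4 : Tendsto (fun r : ℕ => (2 * ((r : ℝ) + (k : ℝ)) + 1) / (2 * (r : ℝ) + 1))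
        atTop (nhds 1) := by
      have : (fun r : ℕ => (2 * ((r : ℝ) + (k : ℝ)) + 1) / (2 * (r : ℝ) + 1))
          = fun r : ℕ => 1 + (2 * (k : ℝ)) / (2 * (r : ℝ) + 1) := by
        funext r
        have hr : (2 * (r : ℝ) + 1) ≠ 0 := by positivity
        field_simp
        ring
      rw [this]
      simpa using tendsto_const_nhds.add h2
    simpa using h4.pow d
  have key : (fun r : ℕ => (((2 * (r + k) + 1) ^ d : ℕ) : ℝ≥0∞) / (((2 * r + 1) ^ d : ℕ) : ℝ≥0∞))
      = fun r : ℕ => ENNReal.ofReal (((2 * ((r : ℝ) + (k : ℝ)) + 1) / (2 * (r : ℝ) + 1)) ^ d) := by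
    funext r
    rw [div_pow, ENNReal.ofReal_div_of_pos (by positivity)]
    norm_cast
  rw [key]
  simpa using ENNReal.tendsto_ofReal h3

-- helper: real liminf from ennreal liminf
lemma aux_liminf_real (u : ℕ → ℝ) (hu : ∀ r, 0 ≤ u r)
    (h : liminf (fun r => ENNReal.ofReal (u r)) atTop = 0) : liminf u atTop = 0 := by
  have hfreq : ∀ ε : ℝ, 0 < ε → ∃ᶠ r in atTop, u r < ε := by
    intro ε hε
    have hlt : liminf (fun r => ENNReal.ofReal (u r)) atTop < ENNReal.ofReal ε := by
      rw [h]; exact ENNReal.ofReal_pos.mpr hε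
    have hf := frequently_lt_of_liminf_lt (by isBoundedDefault) hlt
    exact hf.mono fun r hr => (ENNReal.ofReal_lt_ofReal_iff hε).mp hr
  have hbdd : IsBoundedUnder (· ≥ ·) atTop u := isBoundedUnder_of ⟨0, fun r => hu r⟩
  have hcob : IsCoboundedUnder (· ≥ ·) atTop u :=
    IsCoboundedUnder.of_frequently_le ((hfreq 1 one_pos).mono fun r hr => hr.le)
  have hle : ∀ ε : ℝ, 0 < ε → liminf u atTop ≤ ε := fun ε hε =>
    liminf_le_of_frequently_le ((hfreq ε hε).mono fun r hr => hr.le) hbdd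
  have hge : (0:ℝ) ≤ liminf u atTop := le_liminf_of_le hcob (Eventually.of_forall hu)
  by_contra hne
  have h1 : 0 < liminf u atTop := lt_of_le_of_ne hge (Ne.symm hne)
  have := hle (liminf u atTop / 2) (by linarith)
  linarith

/-- The induced positive `L¹`-isometry of a non-singular `ℤ^d`-action:
`(U_x g)(s) = ω_x(s) · g(φ_x(s))` where `ω_x = d(μ∘φ_x)/dμ` and
`μ∘φ_x = μ(φ_x(·))` is the pushforward of `μ` under `φ_{-x}`. -/
noncomputable def UOpZ {d : ℕ} {S : Type*} [MeasurableSpace S] (μ : Measure S)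
    (φ : (Fin d → ℤ) → S → S) (x : Fin d → ℤ) (g : S → ℝ) : S → ℝ :=
  fun s => ((μ.map (φ (-x))).rnDeriv μ s).toReal * g (φ x s)

/-- Case 2 of the proof of Theorem 4.2 (via Krengel's stochastic ergodic theorem):
for a null non-singular `ℤ^d`-action on a σ-finite measure space (i.e. one admitting no
nonzero finite invariant measure absolutely continuous with respect to `μ`) and a
nonnegative `f₀ ∈ L¹(μ)` with `f_x := U_x f₀`, the ergodic averages of `f_x(s)` over the
boxes `B_r = {-r,…,r}^d` have a.e. lower limit `0`. -/
theorem stmt9 {d : ℕ} (hd : 1 ≤ d) {S : Type*} [MeasurableSpace S]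
    (μ : Measure S) [SigmaFinite μ]
    (φ : (Fin d → ℤ) → S → S)
    (hφm : ∀ x, Measurable (φ x))
    (hφ0 : ∀ s, φ 0 s = s)
    (hφadd : ∀ x y s, φ (x + y) s = φ y (φ x s))
    (hns : ∀ x, μ.map (φ x) ≪ μ ∧ μ ≪ μ.map (φ x))
    (hnull : ∀ ρ : Measure S, IsFiniteMeasure ρ → ρ ≪ μ →
      (∀ x, ∀ A : Set S, MeasurableSet A → ρ (φ x ⁻¹' A) = ρ A) → ρ = 0)
    (f₀ : S → ℝ) (hf₀ : Integrable f₀ μ) (hf₀nn : ∀ s, 0 ≤ f₀ s) :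
    ∀ᵐ s ∂μ,
      Filter.liminf (fun r : ℕ =>
          (∑ x ∈ Fintype.piFinset (fun _ : Fin d => Finset.Icc (-(r : ℤ)) (r : ℤ)),
            UOpZ μ φ x f₀ s) / ((2 * (r : ℝ) + 1) ^ d))
        atTop = 0 := by
  classical
  have hinv : ∀ x s, φ (-x) (φ x s) = s := fun x s => by
    rw [← hφadd x (-x) s, add_neg_cancel, hφ0]
  have hinv' : ∀ x s, φ x (φ (-x) s) = s := fun x s => by
    rw [← hφadd (-x) x s, neg_add_cancel, hφ0]
  have hSF : ∀ x, SigmaFinite (μ.map (φ x)) := fun x =>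
    MeasurableEquiv.sigmaFinite_map
      (⟨⟨φ x, φ (-x), fun s => hinv x s, fun s => hinv' x s⟩, hφm x, hφm (-x)⟩ : S ≃ᵐ S)
  set ω : (Fin d → ℤ) → S → ℝ≥0∞ := fun x => (μ.map (φ (-x))).rnDeriv μ with hω
  have hωm : ∀ x, Measurable (ω x) := fun x => Measure.measurable_rnDeriv _ _
  have hωfin : ∀ x, ∀ᵐ s ∂μ, ω x s ≠ ∞ := by
    intro x
    haveI := hSF (-x)
    filter_upwards [Measure.rnDeriv_lt_top (μ.map (φ (-x))) μ] with s hs using hs.ne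
  have hwd : ∀ x, μ.withDensity (ω x) = μ.map (φ (-x)) := by
    intro x
    haveI := hSF (-x)
    exact Measure.withDensity_rnDeriv_eq _ _ (hns (-x)).1
  have key : ∀ (x) (g : S → ℝ≥0∞), Measurable g →
      ∫⁻ s, ω x s * g (φ x s) ∂μ = ∫⁻ s, g s ∂μ := by
    intro x g hg
    calc ∫⁻ s, ω x s * g (φ x s) ∂μ
        = ∫⁻ s, g (φ x s) ∂(μ.map (φ (-x))) := by
          rw [← hwd x]
          exact (lintegral_withDensity_eq_lintegral_mul μ (hωm x) (hg.comp (hφm x))).symm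
      _ = ∫⁻ s, g (φ x (φ (-x) s)) ∂μ := lintegral_map (hg.comp (hφm x)) (hφm (-x))
      _ = ∫⁻ s, g s ∂μ := by simp only [hinv']
  have cocycle : ∀ x y : Fin d → ℤ, (fun s => ω y s * ω x (φ y s)) =ᵐ[μ] ω (x + y) := by
    intro x y
    have hD : Measurable fun s => ω y s * ω x (φ y s) := (hωm y).mul ((hωm x).comp (hφm y))
    have hmeq : μ.withDensity (fun s => ω y s * ω x (φ y s)) = μ.map (φ (-(x + y))) := by
      have h1 : μ.withDensity (fun s => ω y s * ω x (φ y s))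
          = (μ.withDensity (ω y)).withDensity ((ω x) ∘ (φ y)) :=
        withDensity_mul μ (hωm y) ((hωm x).comp (hφm y))
      rw [h1, hwd y,
        ← aux_map_withDensity μ (φ (-y)) (φ y) (hφm (-y)) (hφm y) (fun s => hinv' y s)
          (ω x) (hωm x),
        hwd x, Measure.map_map (hφm (-y)) (hφm (-x))]
      congr 1
      funext s
      show φ (-y) (φ (-x) s) = φ (-(x + y)) s
      rw [← hφadd (-x) (-y) s, neg_add]
    have h2 := Measure.rnDeriv_withDensity μ hD
    rw [hmeq] at h2
    exact h2.symm
  obtain ⟨f, hfm, hff₀, hfnn⟩ : ∃ f : S → ℝ, Measurable f ∧ f₀ =ᵐ[μ] f ∧ ∀ s, 0 ≤ f s := by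
    refine ⟨fun s => max (hf₀.1.mk f₀ s) 0, hf₀.1.measurable_mk.max measurable_const, ?_,
      fun s => le_max_right _ _⟩
    filter_upwards [hf₀.1.ae_eq_mk] with s hs
    rw [← hs]
    exact (max_eq_left (hf₀nn s)).symm
  have hfcomp : ∀ x, ∀ᵐ s ∂μ, f₀ (φ x s) = f (φ x s) := by
    intro x
    have hN0 : μ {s | ¬ f₀ s = f s} = 0 := ae_iff.mp hff₀
    have hN : μ (toMeasurable μ {s | ¬ f₀ s = f s}) = 0 := by rwa [measure_toMeasurable]
    have hpre : μ (φ x ⁻¹' toMeasurable μ {s | ¬ f₀ s = f s}) = 0 := by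
      rw [← Measure.map_apply (hφm x) (measurableSet_toMeasurable _ _)]
      exact (hns x).1 hN
    have hae : ∀ᵐ s ∂μ, φ x s ∉ toMeasurable μ {s | ¬ f₀ s = f s} := by
      rw [ae_iff]
      simp only [not_not]
      exact hpre
    filter_upwards [hae] with s hs
    by_contra hc
    exact hs (subset_toMeasurable _ _ hc)
  set G : S → ℝ≥0∞ := fun s => ENNReal.ofReal (f s) with hG
  have hGm : Measurable G := ENNReal.measurable_ofReal.comp hfm
  have hGfin : ∫⁻ s, G s ∂μ ≠ ∞ := (hf₀.congr hff₀).lintegral_lt_top.ne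
  set Fx : (Fin d → ℤ) → S → ℝ≥0∞ := fun x s => ω x s * G (φ x s) with hFx
  have hFxm : ∀ x, Measurable (Fx x) := fun x => (hωm x).mul (hGm.comp (hφm x))
  have hFxint : ∀ x, ∫⁻ s, Fx x s ∂μ = ∫⁻ s, G s ∂μ := fun x => key x G hGm
  set box : ℕ → Finset (Fin d → ℤ) :=
    fun r => Fintype.piFinset fun _ : Fin d => Finset.Icc (-(r : ℤ)) (r : ℤ) with hbox
  have hcard : ∀ r, (box r).card = (2 * r + 1) ^ d := by
    intro r
    have hIcc : (Finset.Icc (-(r : ℤ)) (r : ℤ)).card = 2 * r + 1 := by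
      rw [Int.card_Icc]
      omega
    rw [hbox]
    rw [Fintype.card_piFinset]
    simp [hIcc]
  have hNne : ∀ r : ℕ, ((((2 * r + 1) ^ d : ℕ)) : ℝ≥0∞) ≠ 0 := by
    intro r
    simp [pow_ne_zero]
  have hNnt : ∀ r : ℕ, ((((2 * r + 1) ^ d : ℕ)) : ℝ≥0∞) ≠ ∞ := fun r => ENNReal.natCast_ne_top _
  set A : ℕ → S → ℝ≥0∞ :=
    fun r s => (∑ x ∈ box r, Fx x s) / ((((2 * r + 1) ^ d : ℕ)) : ℝ≥0∞) with hA
  have hAm : ∀ r, Measurable (A r) := by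
    intro r
    rw [hA]
    exact (Finset.measurable_sum _ fun x _ => hFxm x).div measurable_const
  have hAint : ∀ r, ∫⁻ s, A r s ∂μ = ∫⁻ s, G s ∂μ := by
    intro r
    have e1 : ∫⁻ s, A r s ∂μ
        = (∫⁻ s, ∑ x ∈ box r, Fx x s ∂μ) * (((((2 * r + 1) ^ d : ℕ)) : ℝ≥0∞))⁻¹ := by
      simp only [hA, div_eq_mul_inv]
      exact lintegral_mul_const' _ _ (ENNReal.inv_ne_top.mpr (hNne r))
    rw [e1, lintegral_finset_sum _ fun x _ => hFxm x]
    have e2 : ∑ x ∈ box r, ∫⁻ s, Fx x s ∂μ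
        = ((((2 * r + 1) ^ d : ℕ)) : ℝ≥0∞) * ∫⁻ s, G s ∂μ := by
      simp only [hFxint]
      rw [Finset.sum_const, hcard r, nsmul_eq_mul]
    rw [e2, mul_comm (((((2 * r + 1) ^ d : ℕ)) : ℝ≥0∞)) _, mul_assoc,
      ENNReal.mul_inv_cancel (hNne r) (hNnt r), mul_one]
  set h : S → ℝ≥0∞ := fun s => liminf (fun r => A r s) atTop with hh
  have hhm : Measurable h := Measurable.liminf hAm
  have hhfin : ∫⁻ s, h s ∂μ ≠ ∞ := by
    have hle : ∫⁻ s, h s ∂μ ≤ ∫⁻ s, G s ∂μ := by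
      refine (lintegral_liminf_le hAm).trans ?_
      simp only [hAint]
      exact (liminf_const _).le
    exact (hle.trans_lt hGfin.lt_top).ne
  have hsub : ∀ y : Fin d → ℤ, ∀ᵐ s ∂μ, ω y s * h (φ y s) ≤ h s := by
    intro y
    set k : ℕ := Finset.univ.sup fun i => (y i).natAbs with hk
    have hyk : ∀ i, -(k : ℤ) ≤ y i ∧ y i ≤ (k : ℤ) := by
      intro i
      have h2 : ((y i).natAbs : ℤ) ≤ (k : ℤ) := by
        exact_mod_cast Finset.le_sup (f := fun i => (y i).natAbs) (Finset.mem_univ i)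
      omega
    have hshift : ∀ (r : ℕ) (x : Fin d → ℤ), x ∈ box r → x + y ∈ box (r + k) := by
      intro r x hx
      rw [hbox, Fintype.mem_piFinset] at hx ⊢
      intro i
      have h1 := hx i
      rw [Finset.mem_Icc] at h1
      rw [Pi.add_apply, Finset.mem_Icc]
      have h3 := hyk i
      push_cast
      omega
    filter_upwards [ae_all_iff.mpr fun x : Fin d → ℤ => cocycle x y, hωfin y]
      with s hcoc hωy
    have step1 : ∀ r : ℕ, ω y s * A r (φ y s)
        ≤ ((((2 * (r + k) + 1) ^ d : ℕ)) : ℝ≥0∞) / ((((2 * r + 1) ^ d : ℕ)) : ℝ≥0∞)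
          * A (r + k) s := by
      intro r
      have e1 : ω y s * A r (φ y s)
          = (∑ x ∈ box r, Fx (x + y) s) / ((((2 * r + 1) ^ d : ℕ)) : ℝ≥0∞) := by
        simp only [hA, div_eq_mul_inv, ← mul_assoc, Finset.mul_sum]
        congr 1
        refine Finset.sum_congr rfl fun x hx => ?_
        simp only [hFx]
        rw [← mul_assoc, hcoc x, ← hφadd y x s, add_comm y x]
      have e2 : (∑ x ∈ box r, Fx (x + y) s) ≤ ∑ z ∈ box (r + k), Fx z s := by
        have himg : ∑ x ∈ box r, Fx (x + y) s
            = ∑ z ∈ (box r).image (fun x => x + y), Fx z s :=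
          (Finset.sum_image (f := fun z => Fx z s) (g := fun x => x + y) (s := box r)
            fun a _ b _ hab => by simpa using congrArg (fun t => t - y) hab).symm
        rw [himg]
        refine Finset.sum_le_sum_of_subset ?_
        intro z hz
        simp only [Finset.mem_image] at hz
        obtain ⟨x, hx, rfl⟩ := hz
        exact hshift r x hx
      calc ω y s * A r (φ y s)
          = (∑ x ∈ box r, Fx (x + y) s) / ((((2 * r + 1) ^ d : ℕ)) : ℝ≥0∞) := e1
        _ ≤ (∑ z ∈ box (r + k), Fx z s) / ((((2 * r + 1) ^ d : ℕ)) : ℝ≥0∞) :=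
            ENNReal.div_le_div_right e2 _
        _ = (∑ z ∈ box (r + k), Fx z s) / ((((2 * (r + k) + 1) ^ d : ℕ)) : ℝ≥0∞)
              * (((((2 * (r + k) + 1) ^ d : ℕ)) : ℝ≥0∞) / ((((2 * r + 1) ^ d : ℕ)) : ℝ≥0∞)) :=
            aux_div_div _ _ _ (hNne (r + k)) (hNnt (r + k))
        _ = ((((2 * (r + k) + 1) ^ d : ℕ)) : ℝ≥0∞) / ((((2 * r + 1) ^ d : ℕ)) : ℝ≥0∞)
              * A (r + k) s := by rw [mul_comm]
    set c : ℕ → ℝ≥0∞ :=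
      fun r => ((((2 * (r + k) + 1) ^ d : ℕ)) : ℝ≥0∞) / ((((2 * r + 1) ^ d : ℕ)) : ℝ≥0∞) with hc
    have hclimsup : limsup c atTop = 1 := (aux_ratio_tendsto d k).limsup_eq
    have l1 : ω y s * h (φ y s) ≤ liminf (fun r => ω y s * A r (φ y s)) atTop := by
      have hml := ENNReal.le_liminf_mul (f := atTop)
        (u := fun _ : ℕ => ω y s) (v := fun r => A r (φ y s))
      rwa [liminf_const] at hml
    have l2 : liminf (fun r => ω y s * A r (φ y s)) atTop
        ≤ liminf (fun r => c r * A (r + k) s) atTop :=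
      liminf_le_liminf (Eventually.of_forall fun r => step1 r)
    have l3 : liminf (fun r => c r * A (r + k) s) atTop ≤ h s := by
      have hml := ENNReal.liminf_mul_le (f := atTop) (u := c) (v := fun r => A (r + k) s)
        (Or.inl (by rw [hclimsup]; exact one_ne_zero))
        (Or.inl (by rw [hclimsup]; exact ENNReal.one_ne_top))
      rw [hclimsup, one_mul] at hml
      have hshift2 : liminf (fun r => A (r + k) s) atTop = h s :=
        liminf_nat_add (fun r => A r s) k
      rw [hshift2] at hml
      exact hml
    exact l1.trans (l2.trans l3)
  have heq : ∀ y : Fin d → ℤ, (fun s => ω y s * h (φ y s)) =ᵐ[μ] h := by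
    intro y
    refine ae_eq_of_ae_le_of_lintegral_le (hsub y) ?_ hhm.aemeasurable ?_
    · rw [key y h hhm]; exact hhfin
    · rw [key y h hhm]
  have hρfin : IsFiniteMeasure (μ.withDensity h) := isFiniteMeasure_withDensity hhfin
  have hρinv : ∀ x, ∀ A0 : Set S, MeasurableSet A0 →
      μ.withDensity h (φ x ⁻¹' A0) = μ.withDensity h A0 := by
    intro x A0 hA0
    rw [withDensity_apply _ (hφm x hA0), withDensity_apply _ hA0]
    have e1 : ∫⁻ s in φ x ⁻¹' A0, h s ∂μ = ∫⁻ s in φ x ⁻¹' A0, ω x s * h (φ x s) ∂μ :=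
      lintegral_congr_ae (ae_restrict_of_ae (heq x).symm)
    rw [e1, ← lintegral_indicator (hφm x hA0)]
    have e2 : ∫⁻ s, (φ x ⁻¹' A0).indicator (fun s => ω x s * h (φ x s)) s ∂μ
        = ∫⁻ s, ω x s * A0.indicator h (φ x s) ∂μ := by
      congr 1
      funext s
      by_cases hs : φ x s ∈ A0
      · rw [Set.indicator_of_mem hs, Set.indicator_of_mem (by exact hs)]
      · rw [Set.indicator_of_notMem hs, Set.indicator_of_notMem (by exact hs), mul_zero]
    rw [e2, key x (A0.indicator h) (hhm.indicator hA0), ← lintegral_indicator hA0]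
  have hρ0 : μ.withDensity h = 0 :=
    hnull _ hρfin (withDensity_absolutelyContinuous μ h) hρinv
  have hh0 : h =ᵐ[μ] 0 := by
    have hz : ∫⁻ s, h s ∂μ = 0 := by
      rw [← setLIntegral_univ, ← withDensity_apply _ MeasurableSet.univ, hρ0]
      simp
    exact (lintegral_eq_zero_iff hhm).mp hz
  filter_upwards [hh0, ae_all_iff.mpr hfcomp, ae_all_iff.mpr hωfin] with s hs0 hfc hωf
  have hnn : ∀ r : ℕ, 0 ≤ (∑ x ∈ box r, UOpZ μ φ x f₀ s) / ((2 * (r : ℝ) + 1) ^ d) := by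
    intro r
    apply div_nonneg _ (by positivity)
    exact Finset.sum_nonneg fun x _ => mul_nonneg ENNReal.toReal_nonneg (hf₀nn _)
  apply aux_liminf_real _ hnn
  have hofReal : ∀ r : ℕ,
      ENNReal.ofReal ((∑ x ∈ box r, UOpZ μ φ x f₀ s) / ((2 * (r : ℝ) + 1) ^ d)) = A r s := by
    intro r
    rw [ENNReal.ofReal_div_of_pos (by positivity)]
    simp only [hA]
    congr 1
    · simp only [UOpZ]
      rw [ENNReal.ofReal_sum_of_nonneg
        fun x _ => mul_nonneg ENNReal.toReal_nonneg (hf₀nn _)]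
      refine Finset.sum_congr rfl fun x _ => ?_
      rw [ENNReal.ofReal_mul ENNReal.toReal_nonneg, ENNReal.ofReal_toReal (hωf x), hfc x]
    · rw [show ((2 * (r : ℝ) + 1) ^ d) = (((2 * r + 1) ^ d : ℕ) : ℝ) by push_cast; ring]
      exact ENNReal.ofReal_natCast _
  simp only [hofReal]
  exact hs0
end

section
/- Let d ≥ 1, let K = [−1/2, 1/2]^d ⊆ ℝ^d, and let f : ℝ^d → [0,∞) be a measurable function. Suppose that the function g(x) := sup_{u∈K} f(x+u) is measurable and satisfies ∫_{ℝ^d} g(x) dx < ∞ (Lebesgue integral). Then f(x) → 0 as ‖x‖ → ∞. -/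
open MeasureTheory Filter

/-- Key deterministic lemma in the proof of Proposition 3.1 (continuous case):
if `f : ℝ^d → [0,∞)` is measurable and the local supremum
`g(x) = sup_{u ∈ K} f(x+u)` over the unit cube `K = [-1/2,1/2]^d` has finite
Lebesgue integral, then `f(x) → 0` as `‖x‖ → ∞`. -/
theorem stmt12 {d : ℕ} (hd : 1 ≤ d)
    (f : (Fin d → ℝ) → ℝ) (hfm : Measurable f) (hfnn : ∀ x, 0 ≤ f x)
    (hint : ∫⁻ x,
        (⨆ u ∈ Set.Icc (fun _ : Fin d => -(1/2 : ℝ)) (fun _ : Fin d => (1/2 : ℝ)),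
          ENNReal.ofReal (f (x + u))) ∂(volume : Measure (Fin d → ℝ)) < ⊤) :
    Tendsto f (Filter.comap (fun x : Fin d → ℝ => ‖x‖) Filter.atTop) (nhds 0) := by
  set c : Fin d → ℝ := fun _ => (1/2 : ℝ) with hcdef
  set g : (Fin d → ℝ) → ENNReal := fun x =>
    ⨆ u ∈ Set.Icc (fun _ : Fin d => -(1/2 : ℝ)) (fun _ : Fin d => (1/2 : ℝ)),
      ENNReal.ofReal (f (x + u)) with hgdef
  by_contra hcon
  rw [Metric.tendsto_nhds] at hcon
  push_neg at hcon
  obtain ⟨ε, hε, hfreq⟩ := hcon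
  rw [Filter.frequently_comap] at hfreq
  -- From the frequent failure, get points of arbitrarily large norm with f ≥ ε
  have H : ∀ R : ℝ, ∃ x : Fin d → ℝ, R ≤ ‖x‖ ∧ ε ≤ f x := by
    intro R
    obtain ⟨r, hr, x, hxr, hx⟩ := frequently_atTop.1 hfreq R
    refine ⟨x, hxr ▸ hr, ?_⟩
    rwa [Real.dist_eq, sub_zero, abs_of_nonneg (hfnn x)] at hx
  choose φ hφ1 hφ2 using H
  -- Recursively build a sequence with norms increasing by at least 2
  set x : ℕ → (Fin d → ℝ) := fun n => Nat.rec (φ 0) (fun _ p => φ (‖p‖ + 2)) n with hxdef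
  have hstep : ∀ n, ‖x n‖ + 2 ≤ ‖x (n + 1)‖ := fun n => hφ1 (‖x n‖ + 2)
  have hfx : ∀ n, ε ≤ f (x n) := by
    intro n
    cases n with
    | zero => exact hφ2 0
    | succ m => exact hφ2 (‖x m‖ + 2)
  have hgap : ∀ m n, m < n → ‖x m‖ + 2 ≤ ‖x n‖ := by
    intro m n hmn
    induction n with
    | zero => omega
    | succ k ih =>
      rcases Nat.lt_succ_iff_lt_or_eq.1 hmn with h | h
      · exact le_trans (ih h) (le_trans (by linarith [hstep k]) le_rfl)
      · exact h ▸ hstep m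
  -- cubes around the x n
  set s : ℕ → Set (Fin d → ℝ) := fun n => Set.Icc (x n - c) (x n + c) with hsdef
  have hsm : ∀ n, MeasurableSet (s n) := fun n => measurableSet_Icc
  have hnormle : ∀ (y : Fin d → ℝ) (n : ℕ), y ∈ s n → ‖y - x n‖ ≤ 1/2 := by
    intro y n hy
    rw [pi_norm_le_iff_of_nonneg (by norm_num)]
    intro i
    have h1 := hy.1 i; have h2 := hy.2 i
    simp only [Pi.sub_apply, Pi.add_apply, hcdef] at h1 h2 ⊢
    rw [Real.norm_eq_abs, abs_le]
    constructor <;> linarith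
  have hdisj : Pairwise (Function.onFun Disjoint s) := by
    have key : ∀ m n, m < n → Disjoint (s m) (s n) := by
      intro m n hmn
      rw [Set.disjoint_left]
      intro y hym hyn
      have h1 : ‖x n - x m‖ ≤ 1 := by
        calc ‖x n - x m‖ ≤ ‖x n - y‖ + ‖y - x m‖ := by
              simpa using norm_sub_le_norm_sub_add_norm_sub (x n) y (x m)
          _ ≤ 1/2 + 1/2 := add_le_add
              (by rw [norm_sub_rev]; exact hnormle y n hyn)
              (hnormle y m hym)
          _ = 1 := by norm_num
      have h2 : ‖x m‖ + 2 ≤ ‖x n‖ := hgap m n hmn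
      have h3 : ‖x n‖ - ‖x m‖ ≤ ‖x n - x m‖ := norm_sub_norm_le _ _
      linarith
    intro m n hmn
    rcases lt_or_gt_of_ne hmn with h | h
    · exact key m n h
    · exact (key n m h).symm
  -- on each cube, g ≥ ε
  have hglb : ∀ n, ∀ y ∈ s n, ENNReal.ofReal ε ≤ g y := by
    intro n y hy
    have hu : x n - y ∈ Set.Icc (fun _ : Fin d => -(1/2 : ℝ)) (fun _ : Fin d => (1/2 : ℝ)) := by
      constructor <;> intro i
      · have := hy.2 i; simp only [Pi.add_apply, hcdef] at this
        simp only [Pi.sub_apply]; linarith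
      · have := hy.1 i; simp only [Pi.sub_apply, hcdef] at this
        simp only [Pi.sub_apply]; linarith
    calc ENNReal.ofReal ε ≤ ENNReal.ofReal (f (y + (x n - y))) := by
          apply ENNReal.ofReal_le_ofReal; rw [add_sub_cancel]; exact hfx n
      _ ≤ g y := by
          rw [hgdef]
          exact le_biSup (fun u => ENNReal.ofReal (f (y + u))) hu
  -- each cube has volume 1
  have hvol : ∀ n, volume (s n) = 1 := by
    intro n
    have h1 : (fun i => ENNReal.ofReal ((x n + c) i - (x n - c) i)) = fun _ : Fin d => 1 := by
      funext i
      simp only [Pi.add_apply, Pi.sub_apply, hcdef]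
      norm_num
    rw [hsdef]
    simp only [Real.volume_Icc_pi, h1, Finset.prod_const_one]
  -- tsum lower bound gives infinite integral
  have hbig : (⊤ : ENNReal) ≤ ∫⁻ y, g y := by
    calc (⊤ : ENNReal) = ∑' _ : ℕ, ENNReal.ofReal ε := by
          rw [ENNReal.tsum_const_eq_top_of_ne_zero (ENNReal.ofReal_pos.2 hε).ne']
      _ ≤ ∑' n, ∫⁻ y in s n, g y := by
          apply ENNReal.tsum_le_tsum
          intro n
          calc ENNReal.ofReal ε = ENNReal.ofReal ε * volume (s n) := by
                rw [hvol n, mul_one]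
            _ = ∫⁻ _ in s n, ENNReal.ofReal ε := (setLIntegral_const _ _).symm
            _ ≤ ∫⁻ y in s n, g y := setLIntegral_mono' (hsm n) (hglb n)
      _ = ∫⁻ y in ⋃ n, s n, g y := (lintegral_iUnion hsm hdisj g).symm
      _ ≤ ∫⁻ y, g y := setLIntegral_le_lintegral _ _
  exact absurd hint (by simp [top_le_iff.1 hbig])
end

section
/- Define f : ℝ → [0,∞) by f(t) = (1 − t²) for |t| ≤ 1 and f(t) = 0 otherwise, and define Z : ℝ → [0,∞) by Z(x) = Σ_{n=1}^∞ f(n²(x−n)). Then ∫_ℝ (sup_{x∈[0,1]} Z(x−y)) dy = +∞. -/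
open MeasureTheory Filter

/-- The bump function `f(t) = (1 - t²)·1_{|t| ≤ 1}` of Example 3.1. -/
noncomputable def bump (t : ℝ) : ℝ := if |t| ≤ 1 then 1 - t ^ 2 else 0

/-- The function `Z(x) = Σ_{n≥1} f(n²(x - n))` of Example 3.1 (indexed by `n = k+1`,
`k : ℕ`). -/
noncomputable def Zfun (x : ℝ) : ℝ :=
  ∑' k : ℕ, bump ((((k : ℝ) + 1) ^ 2) * (x - ((k : ℝ) + 1)))

lemma bump_eq_zero {t : ℝ} (h : 1 ≤ |t|) : bump t = 0 := by
  unfold bump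
  split_ifs with h'
  · have : |t| = 1 := le_antisymm h' h
    have ht : t ^ 2 = 1 := by
      rw [← sq_abs, this]; norm_num
    rw [ht]; ring
  · rfl

lemma zfun_nat (k : ℕ) : Zfun ((k : ℝ) + 1) = 1 := by
  unfold Zfun
  rw [tsum_eq_single k]
  · simp [bump]
  · intro j hj
    apply bump_eq_zero
    have h1 : (1 : ℝ) ≤ (j : ℝ) + 1 := le_add_of_nonneg_left (Nat.cast_nonneg j)
    have hne : (k : ℤ) - (j : ℤ) ≠ 0 := sub_ne_zero.mpr (by exact_mod_cast hj.symm)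
    have h2' : (1 : ℤ) ≤ |(k : ℤ) - (j : ℤ)| := Int.one_le_abs hne
    have h2 : (1 : ℝ) ≤ |(k : ℝ) - (j : ℝ)| := by exact_mod_cast h2'
    have hja : |(j : ℝ) + 1| = (j : ℝ) + 1 := abs_of_nonneg (by positivity)
    have : ((k : ℝ) + 1) - ((j : ℝ) + 1) = (k : ℝ) - j := by ring
    rw [this, abs_mul, abs_pow, hja]
    nlinarith [abs_nonneg ((k : ℝ) - j)]

/-- Example 3.1 (divergence of the extremal coefficient `θ_{[0,1]}`):
`∫ (sup_{x ∈ [0,1]} Z(x - y)) dy = +∞`. -/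
theorem stmt14 :
    ∫⁻ y, (⨆ x ∈ Set.Icc (0 : ℝ) 1, ENNReal.ofReal (Zfun (x - y)))
      ∂(volume : Measure ℝ) = ⊤ := by
  have key : ∀ y ∈ Set.Iic (0 : ℝ),
      (1 : ENNReal) ≤ ⨆ x ∈ Set.Icc (0 : ℝ) 1, ENNReal.ofReal (Zfun (x - y)) := by
    intro y hy
    have hy' : 0 ≤ -y := by simpa using hy
    set k : ℕ := ⌊-y⌋.toNat with hk
    have hkr : (k : ℝ) = ⌊-y⌋ := by
      rw [hk]; exact_mod_cast Int.toNat_of_nonneg (Int.le_floor.mpr (by exact_mod_cast hy'))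
    set x : ℝ := y + (k : ℝ) + 1 with hx
    have hx1 : 0 ≤ x := by
      have := Int.lt_floor_add_one (-y)
      rw [hx, hkr]; linarith
    have hx2 : x ≤ 1 := by
      have := Int.floor_le (-y)
      rw [hx, hkr]; linarith
    have hZ : Zfun (x - y) = 1 := by
      have : x - y = (k : ℝ) + 1 := by rw [hx]; ring
      rw [this, zfun_nat]
    calc (1 : ENNReal) = ENNReal.ofReal (Zfun (x - y)) := by rw [hZ]; simp
      _ ≤ ⨆ x ∈ Set.Icc (0 : ℝ) 1, ENNReal.ofReal (Zfun (x - y)) :=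
        le_biSup (f := fun x => ENNReal.ofReal (Zfun (x - y))) (Set.mem_Icc.mpr ⟨hx1, hx2⟩)
  have h1 : (⊤ : ENNReal) = ∫⁻ y in Set.Iic (0 : ℝ), 1 ∂(volume : Measure ℝ) := by
    simp
  rw [eq_top_iff, h1]
  calc ∫⁻ y in Set.Iic (0 : ℝ), 1 ∂(volume : Measure ℝ)
      ≤ ∫⁻ y in Set.Iic (0 : ℝ),
          (⨆ x ∈ Set.Icc (0 : ℝ) 1, ENNReal.ofReal (Zfun (x - y))) ∂volume :=
        setLIntegral_mono' measurableSet_Iic key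
    _ ≤ ∫⁻ y, (⨆ x ∈ Set.Icc (0 : ℝ) 1, ENNReal.ofReal (Zfun (x - y))) ∂volume :=
        setLIntegral_le_lintegral _ _
end

section
/- Let (Ω, 𝓕, P) be a probability space and let (Z_n)_{n≥1} be real random variables such that for each n, Z_n has centered Gaussian distribution with variance σ_n² satisfying σ_n² > n² (no assumption is made on the joint distribution of the Z_n). Then exp(Z_n − σ_n²/2) → 0 P-almost surely as n → ∞. -/
open MeasureTheory Filter ProbabilityTheory Real
open scoped NNReal

/-- Pointwise pdf bound: for `a² ≤ x²`, the gaussian pdf with variance `v` is bounded by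
`√2 * exp(-a²/(4v))` times the gaussian pdf with variance `2v`. -/
lemma gaussTail_pdf_bound {v : ℝ≥0} (hv : 0 < (v : ℝ)) {a x : ℝ} (hax : a ^ 2 ≤ x ^ 2) :
    gaussianPDFReal 0 v x
      ≤ Real.sqrt 2 * Real.exp (-a ^ 2 / (4 * v)) * gaussianPDFReal 0 (2 * v) x := by
  have hπ : (0:ℝ) < 2 * π * v := by positivity
  have hsqrt : Real.sqrt (2 * π * ((2 * v : ℝ≥0) : ℝ)) = Real.sqrt 2 * Real.sqrt (2 * π * v) := by
    rw [← Real.sqrt_mul (by norm_num)]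
    push_cast
    ring_nf
  unfold gaussianPDFReal
  rw [hsqrt]
  have hs2 : (0:ℝ) < Real.sqrt 2 := by positivity
  have hsv : (0:ℝ) < Real.sqrt (2 * π * v) := Real.sqrt_pos.mpr hπ
  have hcoe : ((2 * v : ℝ≥0) : ℝ) = 2 * (v : ℝ) := by push_cast; ring
  rw [hcoe, mul_inv]
  have key : Real.exp (-(x - 0) ^ 2 / (2 * v))
      ≤ Real.exp (-a ^ 2 / (4 * v)) * Real.exp (-(x - 0) ^ 2 / (2 * (2 * v))) := by
    rw [← Real.exp_add, Real.exp_le_exp]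
    have hvne : (v:ℝ) ≠ 0 := ne_of_gt hv
    rw [show -(x - 0) ^ 2 / (2 * (v:ℝ)) = -x ^ 2 / (4 * v) + -x ^ 2 / (4 * v) by
        field_simp [hvne]; ring,
      show -(x - 0) ^ 2 / (2 * (2 * (v:ℝ))) = -x ^ 2 / (4 * v) by rw [sub_zero]; ring_nf]
    have h4 : (0:ℝ) ≤ 4 * v := by positivity
    have : -x ^ 2 / (4 * (v:ℝ)) ≤ -a ^ 2 / (4 * v) :=
      div_le_div_of_nonneg_right (by linarith) h4
    linarith
  calc (Real.sqrt (2 * π * v))⁻¹ * Real.exp (-(x - 0) ^ 2 / (2 * v))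
      ≤ (Real.sqrt (2 * π * v))⁻¹ *
        (Real.exp (-a ^ 2 / (4 * v)) * Real.exp (-(x - 0) ^ 2 / (2 * (2 * v)))) := by
        exact mul_le_mul_of_nonneg_left key (by positivity)
    _ = Real.sqrt 2 * Real.exp (-a ^ 2 / (4 * v)) *
        ((Real.sqrt 2)⁻¹ * (Real.sqrt (2 * π * v))⁻¹ * Real.exp (-(x - 0) ^ 2 / (2 * (2 * v)))) := by
        field_simp
    _ ≤ _ := le_of_eq (by ring)

/-- Gaussian tail bound. -/
lemma gaussTail {v : ℝ≥0} (hv : v ≠ 0) {a : ℝ} (ha : 0 ≤ a) :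
    gaussianReal 0 v (Set.Ici a)
      ≤ ENNReal.ofReal (Real.sqrt 2 * Real.exp (-a ^ 2 / (4 * v))) := by
  have hv' : (0:ℝ) < v := by positivity
  have h2v : (2 * v : ℝ≥0) ≠ 0 := by simp [hv]
  rw [gaussianReal_of_var_ne_zero _ hv, withDensity_apply _ measurableSet_Ici]
  calc ∫⁻ x in Set.Ici a, gaussianPDF 0 v x
      ≤ ∫⁻ x in Set.Ici a,
          ENNReal.ofReal (Real.sqrt 2 * Real.exp (-a ^ 2 / (4 * v))) * gaussianPDF 0 (2 * v) x := by
        refine setLIntegral_mono ((measurable_gaussianPDF 0 (2 * v)).const_mul _) (fun x hx => ?_)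
        have hax : a ^ 2 ≤ x ^ 2 := by
          have : a ≤ x := hx
          nlinarith
        rw [gaussianPDF, gaussianPDF, ← ENNReal.ofReal_mul (by positivity)]
        exact ENNReal.ofReal_le_ofReal (gaussTail_pdf_bound hv' hax)
    _ ≤ ∫⁻ x, ENNReal.ofReal (Real.sqrt 2 * Real.exp (-a ^ 2 / (4 * v)))
          * gaussianPDF 0 (2 * v) x := setLIntegral_le_lintegral _ _
    _ = ENNReal.ofReal (Real.sqrt 2 * Real.exp (-a ^ 2 / (4 * v))) * 1 := by
        rw [lintegral_const_mul _ (measurable_gaussianPDF _ _),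
          lintegral_gaussianPDF_eq_one _ h2v]
    _ = _ := mul_one _

/-- Key step of Proposition 5.1 (via Borel–Cantelli): if `Z n` is, for each `n ≥ 1`, a
centered Gaussian random variable with variance `v n > n²` (no joint assumption),
then `exp(Z n - v n / 2) → 0` almost surely. -/
theorem stmt15 {Ω : Type*} [MeasurableSpace Ω]
    (P : Measure Ω) [IsProbabilityMeasure P]
    (Z : ℕ → Ω → ℝ) (hmeas : ∀ n, Measurable (Z n))
    (v : ℕ → ℝ≥0)
    (hv : ∀ n : ℕ, 1 ≤ n → ((n : ℝ)) ^ 2 < (v n : ℝ))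
    (hgauss : ∀ n : ℕ, 1 ≤ n → P.map (Z n) = gaussianReal 0 (v n)) :
    ∀ᵐ ω ∂P,
      Tendsto (fun n : ℕ => Real.exp (Z n ω - (v n : ℝ) / 2)) atTop (nhds 0) := by
  -- events: Z n exceeds v n / 2 - k
  classical
  set A : ℕ → ℕ → Set Ω := fun k n => Z n ⁻¹' Set.Ici ((v n : ℝ) / 2 - k) with hA
  have hBC : ∀ k : ℕ, ∀ᵐ ω ∂P, ∀ᶠ n in atTop, ω ∉ A k n := by
    intro k
    apply ae_eventually_notMem
    set N : ℕ := 2 * k + 1 with hN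
    -- uniform bound
    have hbound : ∀ n : ℕ, P (A k n)
        ≤ ENNReal.ofReal (Real.sqrt 2 * Real.exp ((N : ℝ) / 64) * Real.exp (-(n : ℝ) / 64)) := by
      intro n
      by_cases hn : N ≤ n
      · have hn1 : 1 ≤ n := le_trans (by omega) hn
        have hvn : ((n:ℝ))^2 < (v n : ℝ) := hv n hn1
        have hn4k : (4 : ℝ) * k ≤ (n : ℝ) ^ 2 := by
          have : 4 * k ≤ n ^ 2 := by nlinarith [hn, hN]
          exact_mod_cast this
        have hvpos : (0:ℝ) < v n := lt_of_le_of_lt (by positivity) hvn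
        have hvne : v n ≠ 0 := by
          intro h; rw [h] at hvpos; simp at hvpos
        set a : ℝ := (v n : ℝ) / 2 - k with ha'
        clear_value a
        have hav : (v n : ℝ) / 4 ≤ a := by
          rw [ha']
          nlinarith
        have ha0 : 0 ≤ a := le_trans (by linarith) hav
        have hP : P (A k n) = gaussianReal 0 (v n) (Set.Ici a) := by
          rw [ha', hA, ← hgauss n hn1, Measure.map_apply (hmeas n) measurableSet_Ici]
        rw [hP]
        refine le_trans (gaussTail hvne ha0) (ENNReal.ofReal_le_ofReal ?_)
        have hexp1 : (1:ℝ) ≤ Real.exp ((N : ℝ) / 64) := Real.one_le_exp (by positivity)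
        have harg : -a ^ 2 / (4 * v n) ≤ -(n : ℝ) / 64 := by
          rw [div_le_div_iff₀ (by positivity) (by norm_num : (0:ℝ) < 64)]
          have h1 : ((v n : ℝ)/4)^2 ≤ a^2 := by nlinarith
          have hn1' : (1:ℝ) ≤ (n:ℝ) := by exact_mod_cast hn1
          have h2 : ((n:ℝ)) ≤ (n:ℝ)^2 := by nlinarith
          have h3 : (n:ℝ) < v n := lt_of_le_of_lt h2 hvn
          have h1' : ((v n : ℝ)) ^ 2 / 16 ≤ a ^ 2 := by nlinarith [h1]
          nlinarith [h1', mul_lt_mul_of_pos_right h3 hvpos]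
        calc Real.sqrt 2 * Real.exp (-a ^ 2 / (4 * v n))
            ≤ Real.sqrt 2 * Real.exp (-(n : ℝ) / 64) := by
              exact mul_le_mul_of_nonneg_left (Real.exp_le_exp.mpr harg) (by positivity)
          _ = Real.sqrt 2 * 1 * Real.exp (-(n : ℝ) / 64) := by ring
          _ ≤ Real.sqrt 2 * Real.exp ((N : ℝ) / 64) * Real.exp (-(n : ℝ) / 64) := by
              gcongr
      · -- n < N : use P ≤ 1 ≤ bound
        refine le_trans prob_le_one ?_
        rw [show Real.sqrt 2 * Real.exp ((N : ℝ) / 64) * Real.exp (-(n : ℝ) / 64)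
            = Real.sqrt 2 * Real.exp ((N : ℝ) / 64 + -(n : ℝ) / 64) by rw [Real.exp_add]; ring]
        have h1 : (1:ℝ) ≤ Real.exp ((N : ℝ) / 64 + -(n : ℝ) / 64) := by
          apply Real.one_le_exp
          have : (n : ℝ) ≤ N := by exact_mod_cast (le_of_not_ge hn)
          linarith
        have h2 : (1:ℝ) ≤ Real.sqrt 2 := by
          rw [show (1:ℝ) = Real.sqrt 1 by simp]
          exact Real.sqrt_le_sqrt (by norm_num)
        rw [ENNReal.one_le_ofReal]
        nlinarith
    refine ne_top_of_le_ne_top ?_ (ENNReal.tsum_le_tsum hbound)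
    have hsummable : Summable (fun n : ℕ =>
        Real.sqrt 2 * Real.exp ((N : ℝ) / 64) * Real.exp (-(n : ℝ) / 64)) := by
      have : ∀ n : ℕ, Real.exp (-(n : ℝ) / 64) = (Real.exp (-1/64)) ^ n := by
        intro n
        rw [← Real.exp_nat_mul]
        congr 1
        ring
      simp_rw [this]
      exact (summable_geometric_of_lt_one (le_of_lt (Real.exp_pos _))
        (Real.exp_lt_one_iff.mpr (by norm_num))).mul_left _
    rw [← ENNReal.ofReal_tsum_of_nonneg (fun n => by positivity) hsummable]
    exact ENNReal.ofReal_ne_top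
  have hall : ∀ᵐ ω ∂P, ∀ k : ℕ, ∀ᶠ n in atTop, ω ∉ A k n := ae_all_iff.mpr hBC
  filter_upwards [hall] with ω hω
  rw [tendsto_order]
  constructor
  · intro b hb
    exact Eventually.of_forall fun n => lt_trans hb (Real.exp_pos _)
  · intro b hb
    obtain ⟨k, hk⟩ := exists_nat_gt (1 / b)
    have hexpk : 1 / b < Real.exp k := lt_of_lt_of_le hk (by linarith [Real.add_one_le_exp (k:ℝ)])
    have hkb : Real.exp (-(k : ℝ)) < b := by
      rw [Real.exp_neg]
      exact (inv_lt_comm₀ (Real.exp_pos _) hb).mpr (by rwa [← one_div])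
    filter_upwards [hω k] with n hn
    have hlt : Z n ω < (v n : ℝ) / 2 - k := lt_of_not_ge hn
    calc Real.exp (Z n ω - (v n : ℝ)/2) ≤ Real.exp (-(k:ℝ)) :=
          Real.exp_le_exp.mpr (by linarith)
      _ < b := hkb
end
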